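/- arXiv:2203.03261 — 4 statements merged into one kernel-verified Lean document; each statement's English description precedes it below -/
import Mathlib

section
/- Let N be a norm on F and ε a multiplication factor. Then (O_F, N, ε) is a composition algebra if and only if: (i) N(P+R) ε_{PQ} ε_{QR} = 1 for every ordered triple (P,Q,R) of distinct points of F with P+Q+R = 0; and (ii) N(P+Q) N(P+S) ε_{PQ} ε_{QR} ε_{RS} ε_{SP} = −1 for every ordered quadruple (P,Q,R,S) of distinct points of F whose underlying set is a quadrilateral. -/
open Finset

/-- The ambient `𝔽₂`-vector space (the Fano cube); the Fano plane `F` is its set of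
nonzero vectors. -/
abbrev V : Type := Fin 3 → ZMod 2

/-- A multiplication factor: a sign `ε P Q ∈ {−1,1}` for each ordered pair `(P,Q)` of
distinct points of the Fano plane with `ε Q P = −ε P Q`, normalised to `0` outside its
domain of definition. -/
def IsMulFactor (ε : V → V → ℤ) : Prop :=
  (∀ P Q : V, P ≠ 0 → Q ≠ 0 → P ≠ Q → (ε P Q = 1 ∨ ε P Q = -1) ∧ ε Q P = -ε P Q) ∧
  (∀ P Q : V, P = 0 ∨ Q = 0 ∨ P = Q → ε P Q = 0)

/-- A norm on the Fano plane: a map to `{−1,1}` multiplicative on pairs of distinct points. -/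
def IsNorm (N : V → ℤ) : Prop :=
  (∀ P : V, P ≠ 0 → N P = 1 ∨ N P = -1) ∧
  (∀ P Q : V, P ≠ 0 → Q ≠ 0 → P ≠ Q → N (P + Q) = N P * N Q)

/-- A line of the Fano plane: a 3-element set `{P,Q,R}` of nonzero vectors with `P+Q+R=0`. -/
def IsLine (L : Set V) : Prop :=
  ∃ P Q R : V, P ≠ 0 ∧ Q ≠ 0 ∧ R ≠ 0 ∧ P ≠ Q ∧ P ≠ R ∧ Q ≠ R ∧
    P + Q + R = 0 ∧ L = {P, Q, R}

/-- A triangle: a 3-element subset of the Fano plane which is not a line. -/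
def IsTriangle (T : Set V) : Prop :=
  ∃ P Q R : V, P ≠ 0 ∧ Q ≠ 0 ∧ R ≠ 0 ∧ P ≠ Q ∧ P ≠ R ∧ Q ≠ R ∧
    P + Q + R ≠ 0 ∧ T = {P, Q, R}

/-- A quadrilateral: a 4-element subset of the Fano plane containing no line. -/
def IsQuad (S : Set V) : Prop :=
  (∃ P Q R T : V, P ≠ 0 ∧ Q ≠ 0 ∧ R ≠ 0 ∧ T ≠ 0 ∧
    P ≠ Q ∧ P ≠ R ∧ P ≠ T ∧ Q ≠ R ∧ Q ≠ T ∧ R ≠ T ∧ S = {P, Q, R, T}) ∧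
  (∀ L : Set V, IsLine L → ¬ L ⊆ S)

/-- The future of a point `P`: the points `Q` of the Fano plane with `ε P Q = 1`. -/
def Future (ε : V → V → ℤ) (P : V) : Set V := {Q : V | Q ≠ 0 ∧ Q ≠ P ∧ ε P Q = 1}

/-- The past of a point `P`: the points `Q` of the Fano plane with `ε P Q = −1`. -/
def Past (ε : V → V → ℤ) (P : V) : Set V := {Q : V | Q ≠ 0 ∧ Q ≠ P ∧ ε P Q = -1}

/-- The composition conditions (C1) and (C2) on a multiplication factor. -/
def CompCond (ε : V → V → ℤ) : Prop :=
  (∀ P Q R : V, P ≠ 0 → Q ≠ 0 → R ≠ 0 → P ≠ Q → P ≠ R → Q ≠ R → P + Q + R = 0 →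
    ε P Q * ε Q R = 1) ∧
  (∀ P Q R S : V, P ≠ 0 → Q ≠ 0 → R ≠ 0 → S ≠ 0 →
    P ≠ Q → P ≠ R → P ≠ S → Q ≠ R → Q ≠ S → R ≠ S → IsQuad {P, Q, R, S} →
    ε P Q * ε Q R * ε R S * ε S P = -1)

/-- An oriented triangle `{P,Q,R}`: one with `ε P Q = ε Q R = ε R P`. -/
def OrientedTri (ε : V → V → ℤ) (T : Set V) : Prop :=
  ∃ P Q R : V, T = {P, Q, R} ∧ P ≠ Q ∧ P ≠ R ∧ Q ≠ R ∧
    ε P Q = ε Q R ∧ ε Q R = ε R P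

/-- `P` is the distinguished point of the quadrilateral `S`: the point of `S` whose
complement in `S` is the oriented triangle of `S`. -/
def IsDistPt (ε : V → V → ℤ) (S : Set V) (P : V) : Prop :=
  P ∈ S ∧ IsTriangle (S \ {P}) ∧ OrientedTri ε (S \ {P})

/-- A family of subsets of the Fano plane satisfies the Fano axioms if two distinct points
lie in exactly one member and two distinct members meet in exactly one point. -/
def FanoFamily (Δ : Set (Set V)) : Prop :=
  (∀ P Q : V, P ≠ 0 → Q ≠ 0 → P ≠ Q → ∃! T, T ∈ Δ ∧ P ∈ T ∧ Q ∈ T) ∧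
  (∀ T₁ T₂ : Set V, T₁ ∈ Δ → T₂ ∈ Δ → T₁ ≠ T₂ → ∃! X : V, X ∈ T₁ ∩ T₂)

/-- An `n`-oriented map: `α_P(P) + n(P) = 1` on the Fano plane and
`α_P(Q) + α_Q(P) = 1` for distinct points; normalised by `α 0 = 0`. -/
def IsNOrientedMap (n : V →ₗ[ZMod 2] ZMod 2) (α : V → V →ₗ[ZMod 2] ZMod 2) : Prop :=
  (∀ P : V, P ≠ 0 → α P P + n P = 1) ∧
  (∀ P Q : V, P ≠ 0 → Q ≠ 0 → P ≠ Q → α P Q + α Q P = 1) ∧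
  α 0 = 0

/-- An oriented map is a `0`-oriented map. -/
def IsOrientedMap (α : V → V →ₗ[ZMod 2] ZMod 2) : Prop := IsNOrientedMap 0 α

/-- The exponential `e : ZMod 2 → {−1,1}`, `e^0 = 1`, `e^1 = −1`. -/
def eSign (x : ZMod 2) : ℤ := if x = 0 then 1 else -1

/-- The multiplication factor `e^α` associated to an (`n`-)oriented map `α`. -/
def expMap (α : V → V →ₗ[ZMod 2] ZMod 2) : V → V → ℤ :=
  fun P Q => if P ≠ 0 ∧ Q ≠ 0 ∧ P ≠ Q then eSign (α P Q) else 0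

/-- The set `Δ_P = {Q ∈ F : Q ≠ P, α_P(Q) = 1}` associated to an oriented map. -/
def DeltaSet (α : V → V →ₗ[ZMod 2] ZMod 2) (P : V) : Set V :=
  {Q : V | Q ≠ 0 ∧ Q ≠ P ∧ α P Q = 1}

/-- The map `α ↦ α′`, `α′_P = α_P + n(P)·n`. -/
def nTransform (n : V →ₗ[ZMod 2] ZMod 2) (α : V → V →ₗ[ZMod 2] ZMod 2) :
    V → V →ₗ[ZMod 2] ZMod 2 :=
  fun P => α P + n P • n

/-- The norm `e^{n}` on the Fano plane associated to a linear form `n`. -/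
def NormOf (n : V →ₗ[ZMod 2] ZMod 2) : V → ℤ := fun P => eSign (n P)

/-- Structure constants of the octonion-type multiplication on `O_F` determined by a norm `N`
and a multiplication factor `ε`: `e_0` is a two-sided unit, `e_P ⬝ e_P = −N(P) e_0` and
`e_P ⬝ e_Q = ε_{PQ} e_{P+Q}` for distinct points `P`, `Q` of the Fano plane. -/
def structC (𝔽 : Type*) [Field 𝔽] (N : V → ℤ) (ε : V → V → ℤ) (P Q : V) : 𝔽 :=
  if P = 0 ∨ Q = 0 then 1
  else if P = Q then -(N P : 𝔽)
  else (ε P Q : 𝔽)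

/-- The bilinear multiplication on `O_F = (V → 𝔽)` with the above structure constants
(in `V` we have `X = Y + Z ↔ Z = X + Y`). -/
def octMul (𝔽 : Type*) [Field 𝔽] (N : V → ℤ) (ε : V → V → ℤ) (Z W : V → 𝔽) : V → 𝔽 :=
  fun X => ∑ Y : V, structC 𝔽 N ε Y (X + Y) * Z Y * W (X + Y)

/-- The quadratic form `N_O` on `O_F`. -/
def octNorm (𝔽 : Type*) [Field 𝔽] (N : V → ℤ) (Z : V → 𝔽) : 𝔽 :=
  ∑ X : V, (if X = 0 then 1 else (N X : 𝔽)) * Z X ^ 2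

/-- `(O_F, N, ε)` is a composition algebra: `N_O(Z ⬝ W) = N_O(Z) N_O(W)`. -/
def IsCompAlg (𝔽 : Type*) [Field 𝔽] (N : V → ℤ) (ε : V → V → ℤ) : Prop :=
  ∀ Z W : V → 𝔽, octNorm 𝔽 N (octMul 𝔽 N ε Z W) = octNorm 𝔽 N Z * octNorm 𝔽 N W


section StmtZeroAux
lemma addself (x : V) : x + x = 0 := by
  funext i
  have : ∀ a : ZMod 2, a + a = 0 := by decide
  exact this (x i)

lemma addV_eq (x y : V) : x + y = 0 ↔ x = y := by
  constructor
  · intro h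
    have : x + (y + y) = 0 + y := by rw [← add_assoc, h]
    simpa [addself] using this
  · rintro rfl; exact addself _

lemma addV_cancel (x y : V) : x + (x + y) = y := by
  rw [← add_assoc, addself, zero_add]

def cN (N : V → ℤ) (X : V) : ℤ := if X = 0 then 1 else N X

def sZ (N : V → ℤ) (ε : V → V → ℤ) (P Q : V) : ℤ :=
  if P = 0 ∨ Q = 0 then 1 else if P = Q then -(N P) else ε P Q

def StarC (N : V → ℤ) (ε : V → V → ℤ) : Prop :=
  ∀ X Y Y' : V, Y ≠ Y' →
    cN N X * (sZ N ε Y (X + Y) * sZ N ε Y' (X + Y')) +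
    cN N (X + Y + Y') * (sZ N ε Y (X + Y') * sZ N ε Y' (X + Y)) = 0

section Units
variable {N : V → ℤ} {ε : V → V → ℤ}

lemma cN_unit (hN : IsNorm N) (X : V) : cN N X = 1 ∨ cN N X = -1 := by
  unfold cN; split_ifs with h
  · exact Or.inl rfl
  · exact hN.1 X h

lemma sZ_unit (hN : IsNorm N) (hε : IsMulFactor ε) (P Q : V) :
    sZ N ε P Q = 1 ∨ sZ N ε P Q = -1 := by
  unfold sZ; split_ifs with h h2
  · exact Or.inl rfl
  · push_neg at h
    rcases hN.1 P h.1 with h'|h' <;> simp [h']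
  · push_neg at h
    exact (hε.1 P Q h.1 h.2 h2).1

lemma cN_sq (hN : IsNorm N) (X : V) : cN N X * cN N X = 1 := by
  rcases cN_unit hN X with h|h <;> rw [h] <;> norm_num

lemma sZ_sq (hN : IsNorm N) (hε : IsMulFactor ε) (P Q : V) :
    sZ N ε P Q * sZ N ε P Q = 1 := by
  rcases sZ_unit hN hε P Q with h|h <;> rw [h] <;> norm_num

lemma diag (hN : IsNorm N) (hε : IsMulFactor ε) (X Y : V) :
    cN N X * (sZ N ε Y (X + Y) * sZ N ε Y (X + Y)) = cN N Y * cN N (X + Y) := by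
  by_cases hY : Y = 0
  · subst hY; simp [sZ, cN, add_comm]
  by_cases hXY : X + Y = 0
  · obtain rfl : X = Y := (addV_eq X Y).1 hXY
    rw [hXY]
    simp [sZ, cN, hY, cN_sq hN]
  by_cases hX : X = 0
  · subst hX
    simp only [zero_add]
    rcases hN.1 Y hY with h|h <;> simp [sZ, cN, hY, h]
  · have hne : Y ≠ X + Y := by
      intro h
      apply hX
      have := congrArg (fun t => Y + t) h
      simpa [addV_cancel, add_comm] using this.symm
    rw [show sZ N ε Y (X + Y) * sZ N ε Y (X + Y) = 1 from sZ_sq hN hε _ _]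
    have hNX : N X = N Y * N (X + Y) := by
      have h2 := hN.2 Y (X + Y) hY hXY hne
      rwa [show Y + (X + Y) = X by rw [add_comm X Y, addV_cancel]] at h2
    simp [cN, hX, hY, hXY, hNX]
end Units

lemma no_line_of_sum_zero (a b c d : V) (ha : a ≠ 0) (hb : b ≠ 0) (hc : c ≠ 0) (hd : d ≠ 0)
    (h4 : a + b + c + d = 0) :
    ∀ L : Set V, IsLine L → ¬ L ⊆ ({a, b, c, d} : Set V) := by
  rintro L ⟨P, Q, R, hP, hQ, hR, hPQ, hPR, hQR, hsum, rfl⟩ hsub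
  have hPm : P = a ∨ P = b ∨ P = c ∨ P = d := by
    have := hsub (show P ∈ ({P, Q, R} : Set V) by left; rfl)
    simpa using this
  have hQm : Q = a ∨ Q = b ∨ Q = c ∨ Q = d := by
    have := hsub (show Q ∈ ({P, Q, R} : Set V) by right; left; rfl)
    simpa using this
  have hRm : R = a ∨ R = b ∨ R = c ∨ R = d := by
    have := hsub (show R ∈ ({P, Q, R} : Set V) by right; right; rfl)
    simpa using this
  rcases hPm with rfl|rfl|rfl|rfl <;> rcases hQm with rfl|rfl|rfl|rfl <;>
    rcases hRm with rfl|rfl|rfl|rfl <;>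
    first
      | exact hPQ rfl
      | exact hPR rfl
      | exact hQR rfl
      | exact ha (by linear_combination h4 - hsum)
      | exact hb (by linear_combination h4 - hsum)
      | exact hc (by linear_combination h4 - hsum)
      | exact hd (by linear_combination h4 - hsum)

lemma quad_sum_zero (P Q R S : V) (hP : P ≠ 0) (hQ : Q ≠ 0) (hR : R ≠ 0) (hS : S ≠ 0)
    (hPQ : P ≠ Q) (hPR : P ≠ R) (hPS : P ≠ S) (hQR : Q ≠ R) (hQS : Q ≠ S) (hRS : R ≠ S)
    (hq : IsQuad {P, Q, R, S}) : P + Q + R + S = 0 := by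
  classical
  have hline : ∀ x y z : V, x ≠ 0 → y ≠ 0 → z ≠ 0 → x ≠ y → x ≠ z → y ≠ z →
      x + y + z = 0 → ({x, y, z} : Set V) ⊆ {P, Q, R, S} → False := by
    intro x y z h1 h2 h3 h4 h5 h6 h7 h8
    exact hq.2 {x, y, z} ⟨x, y, z, h1, h2, h3, h4, h5, h6, h7, rfl⟩ h8
  set T4 : Finset V := {P, Q, R, S} with hT4
  have hT4card : T4.card = 4 := by
    rw [hT4]
    rw [card_insert_of_notMem (by simp [hPQ, hPR, hPS]),
        card_insert_of_notMem (by simp [hQR, hQS]),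
        card_insert_of_notMem (by simp [hRS]), card_singleton]
  have hT4sub : T4 ⊆ (Finset.univ : Finset V).erase 0 := by
    intro x hx
    rw [hT4] at hx
    simp only [mem_insert, mem_singleton] at hx
    rcases hx with rfl|rfl|rfl|rfl <;> simp [hP, hQ, hR, hS]
  have hcard7 : ((Finset.univ : Finset V).erase 0).card = 7 := by decide
  set C : Finset V := (Finset.univ : Finset V).erase 0 \ T4 with hC
  have hCcard : C.card = 3 := by
    rw [hC, card_sdiff_of_subset hT4sub, hcard7, hT4card]
  have hmemC : ∀ x : V, x ∈ C ↔ x ≠ 0 ∧ x ≠ P ∧ x ≠ Q ∧ x ≠ R ∧ x ≠ S := by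
    intro x
    rw [hC, hT4]
    simp only [mem_sdiff, mem_erase, mem_univ, and_true, mem_insert, mem_singleton]
    push_neg
    tauto
  have sum_mem : ∀ x y : V, x ≠ 0 → y ≠ 0 → x ≠ y → x ∈ ({P,Q,R,S} : Set V) →
      y ∈ ({P,Q,R,S} : Set V) → x + y ∈ C := by
    intro x y hx hy hxy hxm hym
    have gen : ∀ t : V, t ≠ 0 → t ∈ ({P,Q,R,S} : Set V) → x + y = t → False := by
      intro t ht htm hxyt
      by_cases h1 : t = x
      · subst h1; exact hy (by linear_combination hxyt)
      by_cases h2 : t = y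
      · subst h2; exact hx (by linear_combination hxyt)
      · refine hline x y t hx hy ht hxy (fun h => h1 h.symm) (fun h => h2 h.symm)
          (by linear_combination hxyt + addself t) ?_
        intro u hu
        rcases hu with rfl|rfl|rfl
        · exact hxm
        · exact hym
        · exact htm
    rw [hmemC]
    exact ⟨fun h0 => hxy (by linear_combination h0 - addself y),
      fun h => gen P hP (by left; rfl) h,
      fun h => gen Q hQ (by right; left; rfl) h,
      fun h => gen R hR (by right; right; left; rfl) h,
      fun h => gen S hS (by right; right; right; rfl) h⟩
  have hmPQ : P ∈ ({P,Q,R,S} : Set V) := by left; rfl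
  have hmQQ : Q ∈ ({P,Q,R,S} : Set V) := by right; left; rfl
  have hmRR : R ∈ ({P,Q,R,S} : Set V) := by right; right; left; rfl
  have hmSS : S ∈ ({P,Q,R,S} : Set V) := by right; right; right; rfl
  have c1 : P + Q ∈ C := sum_mem P Q hP hQ hPQ hmPQ hmQQ
  have c2 : P + R ∈ C := sum_mem P R hP hR hPR hmPQ hmRR
  have c3 : P + S ∈ C := sum_mem P S hP hS hPS hmPQ hmSS
  have c4 : Q + R ∈ C := sum_mem Q R hQ hR hQR hmQQ hmRR
  have d12 : P + Q ≠ P + R := fun h => hQR (by linear_combination h)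
  have d13 : P + Q ≠ P + S := fun h => hQS (by linear_combination h)
  have d23 : P + R ≠ P + S := fun h => hRS (by linear_combination h)
  set T3 : Finset V := {P + Q, P + R, P + S} with hT3
  have hT3card : T3.card = 3 := by
    rw [hT3, card_insert_of_notMem (by simp [d12, d13]),
        card_insert_of_notMem (by simp [d23]), card_singleton]
  have hT3sub : T3 ⊆ C := by
    intro x hx
    rw [hT3] at hx
    simp only [mem_insert, mem_singleton] at hx
    rcases hx with rfl|rfl|rfl
    · exact c1
    · exact c2
    · exact c3
  have hEq : T3 = C := Finset.eq_of_subset_of_card_le hT3sub (by rw [hCcard, hT3card])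
  have c4' : Q + R ∈ T3 := by rw [hEq]; exact c4
  rw [hT3] at c4'
  simp only [mem_insert, mem_singleton] at c4'
  rcases c4' with h|h|h
  · exact absurd (show R = P by linear_combination h) (fun hh => hPR hh.symm)
  · exact absurd (show Q = P by linear_combination h) (fun hh => hPQ hh.symm)
  · linear_combination h + addself P + addself S

variable {𝔽 : Type*} [Field 𝔽] {N : V → ℤ} {ε : V → V → ℤ}

lemma structC_cast (P Q : V) : structC 𝔽 N ε P Q = ((sZ N ε P Q : ℤ) : 𝔽) := by
  unfold structC sZ; split_ifs <;> push_cast <;> ring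

lemma octNorm_eq (Z : V → 𝔽) : octNorm 𝔽 N Z = ∑ X : V, ((cN N X : ℤ) : 𝔽) * Z X ^ 2 := by
  unfold octNorm cN
  refine Finset.sum_congr rfl fun X _ => ?_
  split_ifs <;> push_cast <;> ring

lemma rearr1 (X Y Y' : V) : (X + Y + Y') + Y = X + Y' := by
  linear_combination addself Y

lemma rearr2 (X Y Y' : V) : (X + Y + Y') + Y' = X + Y := by
  linear_combination addself Y'

lemma rearr3 (X Y Y' : V) : (X + Y + Y') + Y + Y' = X := by
  linear_combination addself Y + addself Y'

theorem compalg_of_star (hN : IsNorm N) (hε : IsMulFactor ε) (hS : StarC N ε) :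
    IsCompAlg 𝔽 N ε := by
  intro Z W
  have hsq : ∀ P Q : V, ((sZ N ε P Q : ℤ) : 𝔽) * ((sZ N ε P Q : ℤ) : 𝔽) = 1 := by
    intro P Q
    rw [← Int.cast_mul, sZ_sq hN hε]; norm_num
  -- expand LHS
  rw [octNorm_eq, octNorm_eq Z, octNorm_eq W]
  have step1 : ∑ X : V, ((cN N X : ℤ) : 𝔽) * (octMul 𝔽 N ε Z W) X ^ 2
      = ∑ X : V, ∑ Y : V, ∑ Y' : V,
        ((cN N X : ℤ) : 𝔽) * ((((sZ N ε Y (X+Y) : ℤ) : 𝔽) * Z Y * W (X+Y)) *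
          (((sZ N ε Y' (X+Y') : ℤ) : 𝔽) * Z Y' * W (X+Y'))) := by
    refine Finset.sum_congr rfl fun X _ => ?_
    have : (octMul 𝔽 N ε Z W) X = ∑ Y : V, ((sZ N ε Y (X+Y) : ℤ) : 𝔽) * Z Y * W (X+Y) := by
      unfold octMul
      exact Finset.sum_congr rfl fun Y _ => by rw [structC_cast]
    rw [this, sq, Finset.sum_mul_sum, Finset.mul_sum]
    exact Finset.sum_congr rfl fun Y _ => by rw [Finset.mul_sum]
  rw [step1]
  -- split each inner sum into diagonal and off-diagonal
  have split : ∀ X Y : V, (∑ Y' : V,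
        ((cN N X : ℤ) : 𝔽) * ((((sZ N ε Y (X+Y) : ℤ) : 𝔽) * Z Y * W (X+Y)) *
          (((sZ N ε Y' (X+Y') : ℤ) : 𝔽) * Z Y' * W (X+Y'))))
      = ((cN N Y : ℤ) : 𝔽) * Z Y ^ 2 * (((cN N (X+Y) : ℤ) : 𝔽) * W (X+Y) ^ 2)
        + ∑ Y' : V, (if Y' = Y then 0 else
          ((cN N X : ℤ) : 𝔽) * ((((sZ N ε Y (X+Y) : ℤ) : 𝔽) * Z Y * W (X+Y)) *
            (((sZ N ε Y' (X+Y') : ℤ) : 𝔽) * Z Y' * W (X+Y')))) := by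
    intro X Y
    have e1 : ∀ Y' : V,
        ((cN N X : ℤ) : 𝔽) * ((((sZ N ε Y (X+Y) : ℤ) : 𝔽) * Z Y * W (X+Y)) *
          (((sZ N ε Y' (X+Y') : ℤ) : 𝔽) * Z Y' * W (X+Y')))
        = (if Y' = Y then
            ((cN N X : ℤ) : 𝔽) * ((((sZ N ε Y (X+Y) : ℤ) : 𝔽) * Z Y * W (X+Y)) *
              (((sZ N ε Y' (X+Y') : ℤ) : 𝔽) * Z Y' * W (X+Y'))) else 0)
          + (if Y' = Y then 0 else
            ((cN N X : ℤ) : 𝔽) * ((((sZ N ε Y (X+Y) : ℤ) : 𝔽) * Z Y * W (X+Y)) *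
              (((sZ N ε Y' (X+Y') : ℤ) : 𝔽) * Z Y' * W (X+Y')))) := by
      intro Y'; split_ifs <;> ring
    rw [Finset.sum_congr rfl fun Y' _ => e1 Y', Finset.sum_add_distrib]
    congr 1
    rw [Finset.sum_ite_eq' Finset.univ Y]
    simp only [Finset.mem_univ, if_true]
    have hdiag : ((cN N X : ℤ) : 𝔽) * (((sZ N ε Y (X+Y) : ℤ) : 𝔽) * ((sZ N ε Y (X+Y) : ℤ) : 𝔽))
        = ((cN N Y : ℤ) : 𝔽) * ((cN N (X+Y) : ℤ) : 𝔽) := by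
      exact_mod_cast congrArg (fun t : ℤ => (t : 𝔽)) (diag hN hε X Y)
    linear_combination (Z Y ^ 2 * W (X+Y) ^ 2) * hdiag
  rw [Finset.sum_congr rfl fun X _ => Finset.sum_congr rfl fun Y _ => split X Y]
  rw [Finset.sum_congr rfl fun X _ => Finset.sum_add_distrib, Finset.sum_add_distrib]
  -- diagonal part equals the product of norms
  have hdiagsum : ∑ X : V, ∑ Y : V,
      ((cN N Y : ℤ) : 𝔽) * Z Y ^ 2 * (((cN N (X+Y) : ℤ) : 𝔽) * W (X+Y) ^ 2)
      = (∑ X : V, ((cN N X : ℤ) : 𝔽) * Z X ^ 2) * (∑ X : V, ((cN N X : ℤ) : 𝔽) * W X ^ 2) := by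
    rw [Finset.sum_comm, Finset.sum_mul]
    refine Finset.sum_congr rfl fun Y _ => ?_
    rw [← Finset.mul_sum]
    congr 1
    exact Fintype.sum_equiv (Equiv.addRight Y)
      (fun X => ((cN N (X+Y) : ℤ) : 𝔽) * W (X+Y) ^ 2)
      (fun X => ((cN N X : ℤ) : 𝔽) * W X ^ 2) (fun X => rfl)
  -- off-diagonal part vanishes
  have hoff : ∑ X : V, ∑ Y : V, ∑ Y' : V, (if Y' = Y then 0 else
      ((cN N X : ℤ) : 𝔽) * ((((sZ N ε Y (X+Y) : ℤ) : 𝔽) * Z Y * W (X+Y)) *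
        (((sZ N ε Y' (X+Y') : ℤ) : 𝔽) * Z Y' * W (X+Y')))) = 0 := by
    rw [show (∑ X : V, ∑ Y : V, ∑ Y' : V, (if Y' = Y then 0 else
      ((cN N X : ℤ) : 𝔽) * ((((sZ N ε Y (X+Y) : ℤ) : 𝔽) * Z Y * W (X+Y)) *
        (((sZ N ε Y' (X+Y') : ℤ) : 𝔽) * Z Y' * W (X+Y'))))) =
      ∑ p : V × V × V, (if p.2.2 = p.2.1 then 0 else
      ((cN N p.1 : ℤ) : 𝔽) * ((((sZ N ε p.2.1 (p.1+p.2.1) : ℤ) : 𝔽) * Z p.2.1 * W (p.1+p.2.1)) *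
        (((sZ N ε p.2.2 (p.1+p.2.2) : ℤ) : 𝔽) * Z p.2.2 * W (p.1+p.2.2))))
      from by simp only [Fintype.sum_prod_type]]
    refine Finset.sum_involution
      (fun p _ => (p.1 + p.2.1 + p.2.2, p.2.1, p.2.2)) ?_ ?_ (fun p _ => Finset.mem_univ _) ?_
    · intro p _
      obtain ⟨X, Y, Y'⟩ := p
      by_cases h : Y' = Y
      · simp [h]
      · simp only
        rw [if_neg h, if_neg h, rearr1, rearr2]
        have hstar := hS X Y Y' (fun hYY => h (hYY.symm))
        have hstarF : ((cN N X : ℤ) : 𝔽) * (((sZ N ε Y (X + Y) : ℤ) : 𝔽) * ((sZ N ε Y' (X + Y') : ℤ) : 𝔽)) +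
            ((cN N (X + Y + Y') : ℤ) : 𝔽) * (((sZ N ε Y (X + Y') : ℤ) : 𝔽) * ((sZ N ε Y' (X + Y) : ℤ) : 𝔽)) = 0 := by
          exact_mod_cast congrArg (fun t : ℤ => (t : 𝔽)) hstar
        linear_combination (Z Y * Z Y' * (W (X+Y) * W (X+Y'))) * hstarF
    · intro p _ hfne
      obtain ⟨X, Y, Y'⟩ := p
      intro heq
      apply hfne
      have h1 : X + Y + Y' = X := congrArg Prod.fst heq
      have h2 : Y' = Y := by
        have : Y' + Y = 0 := by linear_combination h1
        exact (addV_eq Y' Y).1 this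
      simp only
      rw [if_pos h2]
    · intro p _
      obtain ⟨X, Y, Y'⟩ := p
      show ((X + Y + Y') + Y + Y', Y, Y') = (X, Y, Y')
      rw [rearr3]
  rw [hdiagsum, hoff, add_zero]

lemma cN_mul (hN : IsNorm N) (hε : IsMulFactor ε) (X Y : V) :
    cN N Y * cN N (X + Y) = cN N X := by
  have h := diag hN hε X Y
  rw [sZ_sq hN hε, mul_one] at h
  exact h.symm

lemma unit_mul {a b : ℤ} (ha : a = 1 ∨ a = -1) (hb : b = 1 ∨ b = -1) :
    a * b = 1 ∨ a * b = -1 := by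
  rcases ha with rfl|rfl <;> rcases hb with rfl|rfl <;> norm_num

lemma cast_unit_sum (hchar : (2 : 𝔽) ≠ 0) {a b : ℤ} (ha : a = 1 ∨ a = -1)
    (hb : b = 1 ∨ b = -1) (h : ((a : ℤ) : 𝔽) + ((b : ℤ) : 𝔽) = 0) : a + b = 0 := by
  rcases ha with rfl|rfl <;> rcases hb with rfl|rfl <;> push_cast at h <;> norm_num at h ⊢
  · exact absurd h hchar
  · exact absurd h hchar

theorem star_of_compalg (hchar : (2 : 𝔽) ≠ 0) (hN : IsNorm N) (hε : IsMulFactor ε)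
    (h : IsCompAlg 𝔽 N ε) : StarC N ε := by
  intro X₀ Y₀ Y₁ hne
  classical
  set A := X₀ + Y₀ with hA
  set B := X₀ + Y₁ with hB
  set X₁ := X₀ + Y₀ + Y₁ with hX₁
  have hAB : A ≠ B := by
    intro hh
    apply hne
    have : Y₀ + Y₁ = 0 := by rw [hA, hB] at hh; linear_combination hh + addself Y₁
    linear_combination this - addself Y₁
  have hX01 : X₀ ≠ X₁ := by
    intro hh
    apply hne
    linear_combination -hh - addself Y₁ + hX₁
  have hX1Y0 : X₁ + Y₀ = B := by rw [hX₁, hB]; exact rearr1 X₀ Y₀ Y₁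
  have hX1Y1 : X₁ + Y₁ = A := by rw [hX₁, hA]; exact rearr2 X₀ Y₀ Y₁
  set Z : V → 𝔽 := fun v => if v = Y₀ ∨ v = Y₁ then 1 else 0 with hZ
  set W : V → 𝔽 := fun v => if v = A ∨ v = B then 1 else 0 with hW
  have hZY₀ : Z Y₀ = 1 := by simp [hZ]
  have hZY₁ : Z Y₁ = 1 := by simp [hZ]
  have hWA : W A = 1 := by simp [hW]
  have hWB : W B = 1 := by simp [hW]
  -- octNorm Z
  have hNZ : octNorm 𝔽 N Z = ((cN N Y₀ : ℤ) : 𝔽) + ((cN N Y₁ : ℤ) : 𝔽) := by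
    rw [octNorm_eq]
    rw [Finset.sum_eq_add_of_mem Y₀ Y₁ (mem_univ _) (mem_univ _) hne
      (fun c _ hc => by simp [hZ, hc.1, hc.2])]
    rw [hZY₀, hZY₁]; ring
  have hNW : octNorm 𝔽 N W = ((cN N A : ℤ) : 𝔽) + ((cN N B : ℤ) : 𝔽) := by
    rw [octNorm_eq]
    rw [Finset.sum_eq_add_of_mem A B (mem_univ _) (mem_univ _) hAB
      (fun c _ hc => by simp [hW, hc.1, hc.2])]
    rw [hWA, hWB]; ring
  -- octMul
  have hm : ∀ X : V, octMul 𝔽 N ε Z W X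
      = ((sZ N ε Y₀ (X + Y₀) : ℤ) : 𝔽) * W (X + Y₀) + ((sZ N ε Y₁ (X + Y₁) : ℤ) : 𝔽) * W (X + Y₁) := by
    intro X
    unfold octMul
    rw [Finset.sum_eq_add_of_mem Y₀ Y₁ (mem_univ _) (mem_univ _) hne
      (fun c _ hc => by simp [hZ, hc.1, hc.2])]
    rw [hZY₀, hZY₁, structC_cast, structC_cast]; ring
  -- main equation
  have E := h Z W
  rw [hNZ, hNW, octNorm_eq] at E
  rw [Finset.sum_eq_add_of_mem X₀ X₁ (mem_univ _) (mem_univ _) hX01 ?hzero] at E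
  case hzero =>
    intro c _ hc
    have hW0 : W (c + Y₀) = 0 := by
      rw [hW]
      simp only [ite_eq_right_iff]
      rintro (h1|h1)
      · exact absurd (show c = X₀ by rw [hA] at h1; linear_combination h1) hc.1
      · exact absurd (show c = X₁ by rw [hB] at h1; rw [hX₁]; linear_combination h1 - addself Y₀) hc.2
    have hW1 : W (c + Y₁) = 0 := by
      rw [hW]
      simp only [ite_eq_right_iff]
      rintro (h1|h1)
      · exact absurd (show c = X₁ by rw [hA] at h1; rw [hX₁]; linear_combination h1 - addself Y₁) hc.2
      · exact absurd (show c = X₀ by rw [hB] at h1; linear_combination h1) hc.1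
    rw [hm, hW0, hW1]
    ring
  rw [hm X₀, hm X₁, hX1Y0, hX1Y1, ← hA, ← hB, hWA, hWB] at E
  -- now derive the Star identity
  have F1 := sZ_sq hN hε Y₀ A
  have F2 := sZ_sq hN hε Y₁ B
  have F3 := sZ_sq hN hε Y₀ B
  have F4 := sZ_sq hN hε Y₁ A
  have G1 := cN_mul hN hε X₀ Y₀   -- cN Y₀ * cN A = cN X₀  (A = X₀+Y₀)
  have G2' := cN_mul hN hε X₁ Y₁  -- cN Y₁ * cN (X₁+Y₁) = cN X₁
  have G3' := cN_mul hN hε X₁ Y₀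
  have G4 := cN_mul hN hε X₀ Y₁   -- cN Y₁ * cN B = cN X₀
  rw [hX1Y1] at G2'
  rw [hX1Y0] at G3'
  -- cast all to 𝔽
  have c𝔽 : ∀ {u v : ℤ}, u = v → ((u : ℤ) : 𝔽) = ((v : ℤ) : 𝔽) := fun hu => by rw [hu]
  have F1' := c𝔽 F1; have F2' := c𝔽 F2; have F3' := c𝔽 F3; have F4' := c𝔽 F4
  have H1 := c𝔽 G1; have H2 := c𝔽 G2'; have H3 := c𝔽 G3'; have H4 := c𝔽 G4
  push_cast at F1' F2' F3' F4' H1 H2 H3 H4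
  have key : (2 : 𝔽) * (((cN N X₀ : ℤ) : 𝔽) * (((sZ N ε Y₀ A : ℤ) : 𝔽) * ((sZ N ε Y₁ B : ℤ) : 𝔽))
      + ((cN N X₁ : ℤ) : 𝔽) * (((sZ N ε Y₀ B : ℤ) : 𝔽) * ((sZ N ε Y₁ A : ℤ) : 𝔽))) = 0 := by
    push_cast at E ⊢
    linear_combination E - (cN N X₀ : 𝔽) * F1' - (cN N X₀ : 𝔽) * F2'
      - (cN N X₁ : 𝔽) * F3' - (cN N X₁ : 𝔽) * F4' + H1 + H4 + H2 + H3
  have key2 : ((cN N X₀ * (sZ N ε Y₀ A * sZ N ε Y₁ B) : ℤ) : 𝔽)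
      + ((cN N X₁ * (sZ N ε Y₀ B * sZ N ε Y₁ A) : ℤ) : 𝔽) = 0 := by
    have := mul_eq_zero.1 key
    rcases this with h2|h2
    · exact absurd h2 hchar
    · push_cast; push_cast at h2; linear_combination h2
  exact cast_unit_sum hchar
    (unit_mul (cN_unit hN X₀) (unit_mul (sZ_unit hN hε _ _) (sZ_unit hN hε _ _)))
    (unit_mul (cN_unit hN X₁) (unit_mul (sZ_unit hN hε _ _) (sZ_unit hN hε _ _)))
    key2

def CondI (N : V → ℤ) (ε : V → V → ℤ) : Prop :=
  ∀ P Q R : V, P ≠ 0 → Q ≠ 0 → R ≠ 0 → P ≠ Q → P ≠ R → Q ≠ R → P + Q + R = 0 →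
    N (P + R) * (ε P Q * ε Q R) = 1
def CondII (N : V → ℤ) (ε : V → V → ℤ) : Prop :=
  ∀ P Q R S : V, P ≠ 0 → Q ≠ 0 → R ≠ 0 → S ≠ 0 →
    P ≠ Q → P ≠ R → P ≠ S → Q ≠ R → Q ≠ S → R ≠ S → IsQuad {P, Q, R, S} →
    N (P + Q) * N (P + S) * (ε P Q * ε Q R * ε R S * ε S P) = -1

variable {N : V → ℤ} {ε : V → V → ℤ}

lemma sZ0L (Q : V) : sZ N ε 0 Q = 1 := by simp [sZ]
lemma sZ0R (P : V) : sZ N ε P 0 = 1 := by simp [sZ]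
lemma sZself (P : V) (h : P ≠ 0) : sZ N ε P P = -(N P) := by simp [sZ, h]
lemma sZ_eps (P Q : V) (hP : P ≠ 0) (hQ : Q ≠ 0) (hPQ : P ≠ Q) : sZ N ε P Q = ε P Q := by
  simp [sZ, hP, hQ, hPQ]
lemma cN0 : cN N 0 = 1 := by simp [cN]
lemma cN_ne (X : V) (h : X ≠ 0) : cN N X = N X := by simp [cN, h]

-- sign lemmas
lemma sign1 (nt nxt a b : ℤ) (h1 : nt = 1 ∨ nt = -1) (h2 : nxt = 1 ∨ nxt = -1)
    (h3 : a = 1 ∨ a = -1) (h4 : b = 1 ∨ b = -1) (H : nt * (-a * b) = 1) :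
    nt * nxt * b + nxt * a = 0 := by
  rcases h1 with rfl|rfl <;> rcases h2 with rfl|rfl <;> rcases h3 with rfl|rfl <;>
    rcases h4 with rfl|rfl <;> omega

lemma sign2 (ny ny' a b : ℤ) (h1 : ny = 1 ∨ ny = -1) (h2 : ny' = 1 ∨ ny' = -1)
    (h3 : a = 1 ∨ a = -1) (h4 : b = 1 ∨ b = -1) (H : ny * ny' * (a * -b) = 1) :
    ny * b + ny' * a = 0 := by
  rcases h1 with rfl|rfl <;> rcases h2 with rfl|rfl <;> rcases h3 with rfl|rfl <;>
    rcases h4 with rfl|rfl <;> omega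

lemma sign5 (ny ny' e : ℤ) (h3 : e = 1 ∨ e = -1) :
    1 * (-ny * -ny') + ny * ny' * (e * -e) = 0 := by
  rcases h3 with rfl|rfl <;> ring

lemma sign4 (n1 n2 a b c d : ℤ) (h1 : n1 = 1 ∨ n1 = -1) (h2 : n2 = 1 ∨ n2 = -1)
    (h3 : a = 1 ∨ a = -1) (h4 : b = 1 ∨ b = -1) (h5 : c = 1 ∨ c = -1) (h6 : d = 1 ∨ d = -1)
    (H : n1 * n2 * (a * -c * b * -d) = -1) :
    n1 * (a * b) + n2 * (d * c) = 0 := by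
  rcases h1 with rfl|rfl <;> rcases h2 with rfl|rfl <;> rcases h3 with rfl|rfl <;>
    rcases h4 with rfl|rfl <;> rcases h5 with rfl|rfl <;> rcases h6 with rfl|rfl <;> omega

lemma sign6 (np nq nr a b : ℤ) (h1 : np = 1 ∨ np = -1) (h2 : nr = 1 ∨ nr = -1)
    (h3 : a = 1 ∨ a = -1) (h4 : b = 1 ∨ b = -1) (hnq : nq = np * nr)
    (H : nr * -a + np * b = 0) : nq * (a * b) = 1 := by
  subst hnq
  rcases h1 with rfl|rfl <;> rcases h2 with rfl|rfl <;> rcases h3 with rfl|rfl <;>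
    rcases h4 with rfl|rfl <;> omega

lemma sign7 (n1 n2 a b c d : ℤ) (h1 : n1 = 1 ∨ n1 = -1) (h2 : n2 = 1 ∨ n2 = -1)
    (h3 : a = 1 ∨ a = -1) (h4 : b = 1 ∨ b = -1) (h5 : c = 1 ∨ c = -1) (h6 : d = 1 ∨ d = -1)
    (H : n1 * (a * b) + n2 * (c * d) = 0) :
    n1 * n2 * (a * -d * b * -c) = -1 := by
  rcases h1 with rfl|rfl <;> rcases h2 with rfl|rfl <;> rcases h3 with rfl|rfl <;>
    rcases h4 with rfl|rfl <;> rcases h5 with rfl|rfl <;> rcases h6 with rfl|rfl <;> omega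

lemma Hone (hN : IsNorm N) (hε : IsMulFactor ε) (hi : CondI N ε) (T X : V) (hT : T ≠ 0) :
    cN N X * sZ N ε T (X + T) + cN N (X + T) * sZ N ε T X = 0 := by
  by_cases hX : X = 0
  · subst hX
    rw [zero_add, sZself T hT, sZ0R, cN0, cN_ne T hT]
    ring
  by_cases hXT : X = T
  · subst hXT
    rw [addself, sZ0R, cN0, sZself X hX, cN_ne X hX]
    ring
  · have hXT0 : X + T ≠ 0 := fun h => hXT (by linear_combination h - addself T)
    have hTX : T ≠ X + T := fun h => hX (by linear_combination -h)
    have hXXT : X ≠ X + T := fun h => hT (by linear_combination -h)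
    have hi1 := hi X T (X + T) hX hT hXT0 hXT hXXT hTX
      (by linear_combination addself X + addself T)
    rw [show X + (X + T) = T from by linear_combination addself X] at hi1
    rw [cN_ne X hX, cN_ne (X + T) hXT0,
        sZ_eps T (X + T) hT hXT0 hTX, sZ_eps T X hT hX (fun h => hXT h.symm)]
    have hanti : ε X T = -(ε T X) := (hε.1 T X hT hX (fun h => hXT h.symm)).2
    rw [hanti] at hi1
    have hnx : N X = N T * N (X + T) := by
      have h2 := hN.2 T (X + T) hT hXT0 hTX
      rwa [show T + (X + T) = X from by linear_combination addself T] at h2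
    rw [hnx]
    exact sign1 (N T) (N (X + T)) (ε T X) (ε T (X + T)) (hN.1 T hT) (hN.1 _ hXT0)
      (hε.1 T X hT hX (fun h => hXT h.symm)).1 (hε.1 T (X + T) hT hXT0 hTX).1 hi1

lemma Htwo (hN : IsNorm N) (hε : IsMulFactor ε) (hi : CondI N ε) (Y Y' : V)
    (hY : Y ≠ 0) (hY' : Y' ≠ 0) (hne : Y ≠ Y') :
    cN N Y * sZ N ε Y' (Y + Y') + cN N Y' * sZ N ε Y (Y + Y') = 0 := by
  have hB0 : Y + Y' ≠ 0 := fun h => hne (by linear_combination h - addself Y')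
  have hYB : Y ≠ Y + Y' := fun h => hY' (by linear_combination -h)
  have hY'B : Y' ≠ Y + Y' := fun h => hY (by linear_combination -h)
  have hi1 := hi Y (Y + Y') Y' hY hB0 hY' hYB hne (fun h => hY'B h.symm)
    (by linear_combination addself Y + addself Y')
  rw [show Y + Y' = Y + Y' from rfl] at hi1
  -- hi1 : N (Y + Y') * (ε Y (Y+Y') * ε (Y+Y') Y') = 1
  have hanti : ε (Y + Y') Y' = -(ε Y' (Y + Y')) := (hε.1 Y' (Y + Y') hY' hB0 hY'B).2
  rw [hanti] at hi1
  rw [cN_ne Y hY, cN_ne Y' hY', sZ_eps Y' (Y + Y') hY' hB0 hY'B, sZ_eps Y (Y + Y') hY hB0 hYB]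
  have hNB : N (Y + Y') = N Y * N Y' := hN.2 Y Y' hY hY' hne
  rw [hNB] at hi1
  exact sign2 (N Y) (N Y') (ε Y (Y + Y')) (ε Y' (Y + Y')) (hN.1 Y hY) (hN.1 Y' hY')
    (hε.1 Y (Y + Y') hY hB0 hYB).1 (hε.1 Y' (Y + Y') hY' hB0 hY'B).1
    (by linear_combination hi1)

theorem star_of_conds (hN : IsNorm N) (hε : IsMulFactor ε)
    (hi : CondI N ε) (hii : CondII N ε) : StarC N ε := by
  intro X Y Y' hne
  by_cases hY : Y = 0
  · subst hY
    simp only [add_zero]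
    rw [sZ0L, sZ0L]
    have := Hone hN hε hi Y' X (fun h => hne h.symm)
    linear_combination this
  by_cases hY' : Y' = 0
  · subst hY'
    simp only [add_zero]
    rw [sZ0L, sZ0L]
    have := Hone hN hε hi Y X hY
    linear_combination this
  by_cases hXY : X = Y
  · subst hXY
    rw [addself, sZ0R, zero_add, sZ0R]
    have := Htwo hN hε hi X Y' hY hY' hne
    linear_combination this
  by_cases hXY' : X = Y'
  · subst hXY'
    rw [addself, sZ0R, show X + Y + X = Y from by linear_combination addself X, sZ0R]
    have := Htwo hN hε hi X Y hY' hY (fun h => hne h.symm)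
    linear_combination this
  by_cases hX : X = 0
  · subst hX
    simp only [zero_add]
    rw [sZself Y hY, sZself Y' hY', cN0,
        sZ_eps Y Y' hY hY' hne, sZ_eps Y' Y hY' hY (fun h => hne h.symm),
        cN_ne (Y + Y') (fun h => hne (by linear_combination h - addself Y')),
        (hε.1 Y Y' hY hY' hne).2, hN.2 Y Y' hY hY' hne]
    linear_combination sign5 (N Y) (N Y') (ε Y Y') (hε.1 Y Y' hY hY' hne).1
  by_cases hX' : X + Y + Y' = 0
  · have hXe : X = Y + Y' := by linear_combination hX' - addself Y - addself Y'
    subst hXe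
    rw [hX', cN0, show Y + Y' + Y = Y' from by linear_combination addself Y,
        show Y + Y' + Y' = Y from by linear_combination addself Y',
        sZself Y hY, sZself Y' hY', sZ_eps Y Y' hY hY' hne,
        sZ_eps Y' Y hY' hY (fun h => hne h.symm),
        cN_ne (Y + Y') (fun h => hne (by linear_combination h - addself Y')),
        (hε.1 Y Y' hY hY' hne).2, hN.2 Y Y' hY hY' hne]
    linear_combination sign5 (N Y) (N Y') (ε Y Y') (hε.1 Y Y' hY hY' hne).1
  · -- generic case: quadrilateral
    have hA0 : X + Y ≠ 0 := fun h => hXY (by linear_combination h - addself Y)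
    have hB0 : X + Y' ≠ 0 := fun h => hXY' (by linear_combination h - addself Y')
    have hYA : Y ≠ X + Y := fun h => hX (by linear_combination -h)
    have hYB : Y ≠ X + Y' := fun h => hX' (by linear_combination h + addself X + addself Y')
    have hY'A : Y' ≠ X + Y := fun h => hX' (by linear_combination h + addself X + addself Y)
    have hY'B : Y' ≠ X + Y' := fun h => hX (by linear_combination -h)
    have hAB : X + Y ≠ X + Y' := fun h => hne (by linear_combination h)
    have hsum4 : Y + (X + Y) + Y' + (X + Y') = 0 := by
      linear_combination addself X + addself Y + addself Y'
    have hquad : IsQuad ({Y, X + Y, Y', X + Y'} : Set V) :=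
      ⟨⟨Y, X + Y, Y', X + Y', hY, hA0, hY', hB0, hYA, hne, hYB,
        (fun h => hY'A h.symm), hAB, hY'B, rfl⟩,
       no_line_of_sum_zero Y (X + Y) Y' (X + Y') hY hA0 hY' hB0 hsum4⟩
    have h2 := hii Y (X + Y) Y' (X + Y') hY hA0 hY' hB0 hYA hne hYB
      (fun h => hY'A h.symm) hAB hY'B hquad
    rw [show Y + (X + Y) = X from by linear_combination addself Y,
        show Y + (X + Y') = X + Y + Y' from by ring,
        (show ε (X + Y) Y' = -(ε Y' (X + Y)) from (hε.1 Y' (X + Y) hY' hA0 hY'A).2),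
        (show ε (X + Y') Y = -(ε Y (X + Y')) from (hε.1 Y (X + Y') hY hB0 hYB).2)] at h2
    rw [cN_ne X hX, cN_ne (X + Y + Y') hX',
        sZ_eps Y (X + Y) hY hA0 hYA, sZ_eps Y' (X + Y') hY' hB0 hY'B,
        sZ_eps Y (X + Y') hY hB0 hYB, sZ_eps Y' (X + Y) hY' hA0 hY'A]
    exact sign4 (N X) (N (X + Y + Y')) (ε Y (X + Y)) (ε Y' (X + Y')) (ε Y' (X + Y))
      (ε Y (X + Y')) (hN.1 X hX) (hN.1 _ hX')
      (hε.1 Y (X + Y) hY hA0 hYA).1 (hε.1 Y' (X + Y') hY' hB0 hY'B).1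
      (hε.1 Y' (X + Y) hY' hA0 hY'A).1 (hε.1 Y (X + Y') hY hB0 hYB).1
      (by linear_combination h2)

theorem conds_of_star (hN : IsNorm N) (hε : IsMulFactor ε) (hS : StarC N ε) :
    CondI N ε ∧ CondII N ε := by
  constructor
  · intro P Q R hP hQ hR hPQ hPR hQR hsum
    have hs := hS R Q 0 hQ
    rw [add_zero, add_zero, sZ0L, sZ0L,
        show R + Q = P from by linear_combination hsum - addself P] at hs
    rw [cN_ne R hR, cN_ne P hP, sZ_eps Q P hQ hP (fun h => hPQ h.symm),
        sZ_eps Q R hQ hR hQR] at hs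
    rw [show P + R = Q from by linear_combination hsum - addself Q]
    have hanti : ε Q P = -(ε P Q) := (hε.1 P Q hP hQ hPQ).2
    rw [hanti] at hs
    exact sign6 (N P) (N Q) (N R) (ε P Q) (ε Q R) (hN.1 P hP) (hN.1 R hR)
      (hε.1 P Q hP hQ hPQ).1 (hε.1 Q R hQ hR hQR).1
      (by rw [show Q = P + R from by linear_combination hsum - addself P - addself R]
          exact hN.2 P R hP hR hPR)
      (by linear_combination hs)
  · intro P Q R S hP hQ hR hS4 hPQ hPR hPS hQR hQS hRS hquad
    have hsum4 := quad_sum_zero P Q R S hP hQ hR hS4 hPQ hPR hPS hQR hQS hRS hquad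
    have hs := hS (P + Q) P R hPR
    rw [show P + Q + P = Q from by linear_combination addself P,
        show P + Q + R = S from by linear_combination hsum4 - addself S,
        show Q + R = P + S from by linear_combination hsum4 - addself P - addself S]
      at hs
    rw [cN_ne (P + Q) (fun h => hPQ (by linear_combination h - addself Q)),
        cN_ne (P + S) (fun h => hPS (by linear_combination h - addself S)),
        sZ_eps P Q hP hQ hPQ, sZ_eps R S hR hS4 hRS, sZ_eps P S hP hS4 hPS,
        sZ_eps R Q hR hQ (fun h => hQR h.symm)] at hs
    rw [(show ε Q R = -(ε R Q) from (hε.1 R Q hR hQ (fun h => hQR h.symm)).2),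
        (show ε S P = -(ε P S) from (hε.1 P S hP hS4 hPS).2)]
    exact sign7 (N (P + Q)) (N (P + S)) (ε P Q) (ε R S) (ε P S) (ε R Q)
      (hN.1 _ (fun h => hPQ (by linear_combination h - addself Q)))
      (hN.1 _ (fun h => hPS (by linear_combination h - addself S)))
      (hε.1 P Q hP hQ hPQ).1 (hε.1 R S hR hS4 hRS).1 (hε.1 P S hP hS4 hPS).1
      (hε.1 R Q hR hQ (fun h => hQR h.symm)).1
      (by linear_combination hs)

end StmtZeroAux

/-- `(O_F, N, ε)` is a composition algebra iff the line condition (i) and the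
quadrilateral condition (ii) hold. -/
theorem stmt_0 (𝔽 : Type*) [Field 𝔽] (hchar : (2 : 𝔽) ≠ 0)
    (N : V → ℤ) (ε : V → V → ℤ) (hN : IsNorm N) (hε : IsMulFactor ε) :
    IsCompAlg 𝔽 N ε ↔
      ((∀ P Q R : V, P ≠ 0 → Q ≠ 0 → R ≠ 0 → P ≠ Q → P ≠ R → Q ≠ R → P + Q + R = 0 →
          N (P + R) * (ε P Q * ε Q R) = 1) ∧
       (∀ P Q R S : V, P ≠ 0 → Q ≠ 0 → R ≠ 0 → S ≠ 0 →
          P ≠ Q → P ≠ R → P ≠ S → Q ≠ R → Q ≠ S → R ≠ S → IsQuad {P, Q, R, S} →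
          N (P + Q) * N (P + S) * (ε P Q * ε Q R * ε R S * ε S P) = -1)) := by
  constructor
  · intro h
    have hc := conds_of_star hN hε (star_of_compalg hchar hN hε h)
    exact ⟨hc.1, hc.2⟩
  · rintro ⟨h1, h2⟩
    exact compalg_of_star hN hε (star_of_conds hN hε h1 h2)
end

section
/- Suppose (O_F, 1, ε) is a composition algebra (with the trivial norm). Then either the future →P is a line for every P ∈ F, or the past ←P is a line for every P ∈ F. -/
open Finset

/-! ### Auxiliary machinery for `stmt_1` -/

lemma st1_addiff : ∀ x a b : V, x + a = b ↔ x = a + b := by decide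
lemma st1_aba : ∀ a b : V, a + b + a = b := by decide
lemma st1_key3 : ∀ a b c : V, a + b + c = 0 → a + b = c := by decide
lemma st1_perm3 : ∀ a b c : V, a + b + c = 0 → a + c + b = 0 := by decide
lemma st1_perm3' : ∀ a b c : V, a + b + c = 0 → b + c + a = 0 := by decide
lemma st1_perm3'' : ∀ a b c : V, a + b + c = 0 → c + a + b = 0 := by decide
lemma st1_key4a : ∀ a b c d : V, a + b + c + d = 0 → b + c = a + d := by decide
lemma st1_key4b : ∀ a b c d : V, a + b + c + d = 0 → b + d = a + c := by decide
lemma st1_addne : ∀ a b c : V, b ≠ c → a + b ≠ a + c := by decide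

def st1_dl (𝔽 : Type*) [Field 𝔽] (A : V) : V → 𝔽 := fun X => if X = A then 1 else 0

lemma st1_octMul_add_left (𝔽 : Type*) [Field 𝔽] (N : V → ℤ) (ε : V → V → ℤ) (Z1 Z2 W : V → 𝔽) :
    octMul 𝔽 N ε (Z1 + Z2) W = octMul 𝔽 N ε Z1 W + octMul 𝔽 N ε Z2 W := by
  funext X
  simp [octMul, Pi.add_apply, mul_add, add_mul, Finset.sum_add_distrib]

lemma st1_octMul_add_right (𝔽 : Type*) [Field 𝔽] (N : V → ℤ) (ε : V → V → ℤ) (Z W1 W2 : V → 𝔽) :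
    octMul 𝔽 N ε Z (W1 + W2) = octMul 𝔽 N ε Z W1 + octMul 𝔽 N ε Z W2 := by
  funext X
  simp [octMul, Pi.add_apply, mul_add, add_mul, Finset.sum_add_distrib]

lemma st1_octMul_delta (𝔽 : Type*) [Field 𝔽] (N : V → ℤ) (ε : V → V → ℤ) (A B : V) :
    octMul 𝔽 N ε (st1_dl 𝔽 A) (st1_dl 𝔽 B)
      = fun X => if X = A + B then structC 𝔽 N ε A B else 0 := by
  funext X
  have : ∀ Y : V, structC 𝔽 N ε Y (X + Y) * st1_dl 𝔽 A Y * st1_dl 𝔽 B (X + Y)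
      = if Y = A then structC 𝔽 N ε A (X + A) * st1_dl 𝔽 B (X + A) else 0 := by
    intro Y
    by_cases h : Y = A <;> simp [st1_dl, h]
  rw [octMul]
  rw [Finset.sum_congr rfl (fun Y _ => this Y), Finset.sum_ite_eq' (Finset.univ) A]
  simp only [Finset.mem_univ, if_true, st1_dl]
  by_cases hX : X = A + B
  · subst hX
    rw [if_pos rfl, if_pos (by rw [st1_aba]), mul_one]
    rw [st1_aba]
  · rw [if_neg (fun h => hX ((st1_addiff X A B).mp h)), mul_zero, if_neg hX]

lemma st1_norm_two (𝔽 : Type*) [Field 𝔽] (a b : 𝔽) (A B : V) (hAB : A ≠ B) :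
    octNorm 𝔽 (fun _ => 1)
      (fun X => (if X = A then a else 0) + (if X = B then b else 0)) = a ^ 2 + b ^ 2 := by
  rw [octNorm]
  have : ∀ X : V, (if X = 0 then (1:𝔽) else ((1:ℤ):𝔽))
        * ((if X = A then a else 0) + (if X = B then b else 0)) ^ 2
      = (if X = A then a ^ 2 else 0) + (if X = B then b ^ 2 else 0) := by
    intro X
    by_cases h1 : X = A
    · subst h1; rw [if_neg hAB, if_pos rfl, if_neg hAB]; simp
    · by_cases h2 : X = B
      · subst h2; rw [if_neg h1, if_pos rfl, if_neg h1, if_pos rfl]; simp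
      · simp [h1, h2]
  rw [Finset.sum_congr rfl (fun X _ => this X), Finset.sum_add_distrib,
    Finset.sum_ite_eq' Finset.univ A, Finset.sum_ite_eq' Finset.univ B]
  simp

set_option linter.unreachableTactic false in
set_option linter.unusedTactic false in
lemma st1_C1 (𝔽 : Type*) [Field 𝔽] (hchar : (2 : 𝔽) ≠ 0) (ε : V → V → ℤ)
    (hcomp : IsCompAlg 𝔽 (fun _ => 1) ε)
    (P Q R : V) (hP : P ≠ 0) (hQ : Q ≠ 0) (hR : R ≠ 0)
    (hPQ : P ≠ Q) (hPR : P ≠ R) (hQR : Q ≠ R) (hsum : P + Q + R = 0)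
    (e1 : ε P Q = 1 ∨ ε P Q = -1) (e2 : ε P R = 1 ∨ ε P R = -1) :
    ε P Q = - ε P R := by
  have h := hcomp (st1_dl 𝔽 0 + st1_dl 𝔽 P) (st1_dl 𝔽 Q + st1_dl 𝔽 R)
  rw [st1_octMul_add_left, st1_octMul_add_right, st1_octMul_add_right,
    st1_octMul_delta, st1_octMul_delta, st1_octMul_delta, st1_octMul_delta] at h
  have hPQR : P + Q = R := st1_key3 P Q R hsum
  have hPRQ : P + R = Q := st1_key3 P R Q (st1_perm3 P Q R hsum)
  have hc0Q : structC 𝔽 (fun _ => 1) ε 0 Q = 1 := by simp [structC]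
  have hc0R : structC 𝔽 (fun _ => 1) ε 0 R = 1 := by simp [structC]
  have hcPQ : structC 𝔽 (fun _ => 1) ε P Q = (ε P Q : 𝔽) := by simp [structC, hP, hQ, hPQ]
  have hcPR : structC 𝔽 (fun _ => 1) ε P R = (ε P R : 𝔽) := by simp [structC, hP, hR, hPR]
  rw [hc0Q, hc0R, hcPQ, hcPR, hPQR, hPRQ, zero_add, zero_add] at h
  have hfun : (fun X => if X = Q then (1:𝔽) else 0) + (fun X => if X = R then (1:𝔽) else 0)
      + ((fun X => if X = R then (ε P Q : 𝔽) else 0) + fun X => if X = Q then (ε P R : 𝔽) else 0)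
      = fun X => (if X = Q then (1 + (ε P R : 𝔽)) else 0) + (if X = R then (1 + (ε P Q : 𝔽)) else 0) := by
    funext X
    by_cases h1 : X = Q <;> by_cases h2 : X = R <;>
      simp [h1, h2, hQR, Ne.symm hQR] <;> ring
  rw [hfun] at h
  rw [st1_norm_two 𝔽 _ _ _ _ hQR] at h
  have hZ : octNorm 𝔽 (fun _ => 1) (st1_dl 𝔽 0 + st1_dl 𝔽 P) = 2 := by
    have : (st1_dl 𝔽 0 + st1_dl 𝔽 P)
        = fun X => (if X = 0 then (1:𝔽) else 0) + (if X = P then (1:𝔽) else 0) := rfl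
    rw [this, st1_norm_two 𝔽 _ _ _ _ (Ne.symm hP)]; norm_num
  have hW : octNorm 𝔽 (fun _ => 1) (st1_dl 𝔽 Q + st1_dl 𝔽 R) = 2 := by
    have : (st1_dl 𝔽 Q + st1_dl 𝔽 R)
        = fun X => (if X = Q then (1:𝔽) else 0) + (if X = R then (1:𝔽) else 0) := rfl
    rw [this, st1_norm_two 𝔽 _ _ _ _ hQR]; norm_num
  rw [hZ, hW] at h
  rcases e1 with h1 | h1 <;> rcases e2 with h2 | h2 <;> rw [h1, h2] at h <;> push_cast at h
  · exact absurd (by linear_combination h) (mul_ne_zero hchar hchar)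
  · omega
  · omega
  · exact absurd (by linear_combination -h) (mul_ne_zero hchar hchar)

set_option linter.unreachableTactic false in
set_option linter.unusedTactic false in
lemma st1_C2 (𝔽 : Type*) [Field 𝔽] (hchar : (2 : 𝔽) ≠ 0) (ε : V → V → ℤ)
    (hcomp : IsCompAlg 𝔽 (fun _ => 1) ε)
    (P Q R S : V) (hP : P ≠ 0) (hQ : Q ≠ 0) (hR : R ≠ 0) (hS : S ≠ 0)
    (hPQ : P ≠ Q) (hPR : P ≠ R) (hPS : P ≠ S) (hQR : Q ≠ R) (hQS : Q ≠ S) (hRS : R ≠ S)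
    (hsum : P + Q + R + S = 0)
    (e1 : ε P R = 1 ∨ ε P R = -1) (e2 : ε Q S = 1 ∨ ε Q S = -1)
    (e3 : ε P S = 1 ∨ ε P S = -1) (e4 : ε Q R = 1 ∨ ε Q R = -1) :
    ε P R * ε Q S + ε P S * ε Q R = 0 := by
  have h := hcomp (st1_dl 𝔽 P + st1_dl 𝔽 Q) (st1_dl 𝔽 R + st1_dl 𝔽 S)
  rw [st1_octMul_add_left, st1_octMul_add_right, st1_octMul_add_right,
    st1_octMul_delta, st1_octMul_delta, st1_octMul_delta, st1_octMul_delta] at h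
  have hQR' : Q + R = P + S := st1_key4a P Q R S hsum
  have hQS' : Q + S = P + R := st1_key4b P Q R S hsum
  have hcPR : structC 𝔽 (fun _ => 1) ε P R = (ε P R : 𝔽) := by simp [structC, hP, hR, hPR]
  have hcPS : structC 𝔽 (fun _ => 1) ε P S = (ε P S : 𝔽) := by simp [structC, hP, hS, hPS]
  have hcQR : structC 𝔽 (fun _ => 1) ε Q R = (ε Q R : 𝔽) := by simp [structC, hQ, hR, hQR]
  have hcQS : structC 𝔽 (fun _ => 1) ε Q S = (ε Q S : 𝔽) := by simp [structC, hQ, hS, hQS]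
  rw [hcPR, hcPS, hcQR, hcQS, hQR', hQS'] at h
  have hAB : P + R ≠ P + S := st1_addne P R S hRS
  have hfun : ((fun X => if X = P + R then (ε P R : 𝔽) else 0)
        + fun X => if X = P + S then (ε P S : 𝔽) else 0)
      + ((fun X => if X = P + S then (ε Q R : 𝔽) else 0)
        + fun X => if X = P + R then (ε Q S : 𝔽) else 0)
      = fun X => (if X = P + R then ((ε P R : 𝔽) + (ε Q S : 𝔽)) else 0)
        + (if X = P + S then ((ε P S : 𝔽) + (ε Q R : 𝔽)) else 0) := by
    funext X
    by_cases h1 : X = P + R <;> by_cases h2 : X = P + S <;>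
      simp [h1, h2, hAB, Ne.symm hAB] <;> ring
  rw [hfun, st1_norm_two 𝔽 _ _ _ _ hAB] at h
  have hZ : octNorm 𝔽 (fun _ => 1) (st1_dl 𝔽 P + st1_dl 𝔽 Q) = 2 := by
    have : (st1_dl 𝔽 P + st1_dl 𝔽 Q)
        = fun X => (if X = P then (1:𝔽) else 0) + (if X = Q then (1:𝔽) else 0) := rfl
    rw [this, st1_norm_two 𝔽 _ _ _ _ hPQ]; norm_num
  have hW : octNorm 𝔽 (fun _ => 1) (st1_dl 𝔽 R + st1_dl 𝔽 S) = 2 := by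
    have : (st1_dl 𝔽 R + st1_dl 𝔽 S)
        = fun X => (if X = R then (1:𝔽) else 0) + (if X = S then (1:𝔽) else 0) := rfl
    rw [this, st1_norm_two 𝔽 _ _ _ _ hRS]; norm_num
  rw [hZ, hW] at h
  rcases e1 with h1 | h1 <;> rcases e2 with h2 | h2 <;> rcases e3 with h3 | h3 <;>
    rcases e4 with h4 | h4 <;> rw [h1, h2, h3, h4] at h <;> push_cast at h <;>
    first
      | (rw [h1, h2, h3, h4]; decide)
      | exact absurd (by linear_combination h) (mul_ne_zero hchar hchar)
      | exact absurd (by linear_combination -h) (mul_ne_zero hchar hchar)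

def st1_pt : Fin 7 → V :=
  ![![1,0,0], ![0,1,0], ![1,1,0], ![0,0,1], ![1,0,1], ![0,1,1], ![1,1,1]]

def st1_lns : Fin 7 → Fin 7 × Fin 7 × Fin 7 :=
  ![(0,1,2), (0,3,4), (0,5,6), (1,3,5), (1,4,6), (2,3,6), (2,4,5)]

def st1_qds : Fin 7 → Fin 7 × Fin 7 × Fin 7 × Fin 7 :=
  ![(3,4,5,6), (1,2,5,6), (1,2,3,4), (0,2,4,6), (0,2,3,5), (0,1,4,5), (0,1,3,6)]

def st1_E (s : Fin 7 → Bool) : Fin 7 → Fin 7 → Bool :=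

  ![ ![ false, s 0, !s 0, s 1, !s 1, s 2, !s 2 ],
     ![ !s 0, false, s 0, s 3, s 4, !s 3, !s 4 ],
     ![ s 0, !s 0, false, s 5, s 6, !s 6, !s 5 ],
     ![ !s 1, !s 3, !s 5, false, s 1, s 3, s 5 ],
     ![ s 1, !s 4, !s 6, !s 1, false, s 6, s 4 ],
     ![ !s 2, s 3, s 6, !s 3, !s 6, false, s 2 ],
     ![ s 2, s 4, s 5, !s 5, !s 4, !s 2, false ] ]

def st1_Q2 (s : Fin 7 → Bool) (k : Fin 7) : Bool :=
  ((st1_E s (st1_qds k).1 (st1_qds k).2.2.1 == st1_E s (st1_qds k).2.1 (st1_qds k).2.2.2)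
      != (st1_E s (st1_qds k).1 (st1_qds k).2.2.2 == st1_E s (st1_qds k).2.1 (st1_qds k).2.2.1))
  && ((st1_E s (st1_qds k).1 (st1_qds k).2.1 == st1_E s (st1_qds k).2.2.1 (st1_qds k).2.2.2)
      != (st1_E s (st1_qds k).1 (st1_qds k).2.2.2 == st1_E s (st1_qds k).2.2.1 (st1_qds k).2.1))

def st1_lineCk (T : Fin 7 → Bool) : Bool :=
  decide (∃ k : Fin 7, ∀ j : Fin 7,
    T j = (decide (j = (st1_lns k).1) || decide (j = (st1_lns k).2.1) || decide (j = (st1_lns k).2.2)))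

set_option maxRecDepth 10000 in
theorem st1_keyDecide : ∀ s : Fin 7 → Bool, (∀ k : Fin 7, st1_Q2 s k = true) →
    ((∀ i : Fin 7, st1_lineCk (fun j => decide (j ≠ i) && st1_E s i j) = true) ∨
     (∀ i : Fin 7, st1_lineCk (fun j => decide (j ≠ i) && !st1_E s i j) = true)) := by decide

lemma st1_pt_ne : ∀ i : Fin 7, st1_pt i ≠ 0 := by decide
lemma st1_pt_inj : ∀ i j : Fin 7, st1_pt i = st1_pt j → i = j := by decide
lemma st1_pt_surj : ∀ P : V, P ≠ 0 → ∃ i : Fin 7, st1_pt i = P := by decide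
lemma st1_lns_sum : ∀ k : Fin 7,
    st1_pt (st1_lns k).1 + st1_pt (st1_lns k).2.1 + st1_pt (st1_lns k).2.2 = 0 := by decide
lemma st1_lns_d1 : ∀ k : Fin 7, st1_pt (st1_lns k).1 ≠ st1_pt (st1_lns k).2.1 := by decide
lemma st1_lns_d2 : ∀ k : Fin 7, st1_pt (st1_lns k).1 ≠ st1_pt (st1_lns k).2.2 := by decide
lemma st1_lns_d3 : ∀ k : Fin 7, st1_pt (st1_lns k).2.1 ≠ st1_pt (st1_lns k).2.2 := by decide

def st1_sOf (ε : V → V → ℤ) : Fin 7 → Bool :=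
  fun k => decide (ε (st1_pt (st1_lns k).1) (st1_pt (st1_lns k).2.1) = 1)

lemma st1_negdec (x y : ℤ) (hx : x = 1 ∨ x = -1) (hyx : y = -x) :
    (!decide (x = 1)) = decide (y = 1) := by
  rcases hx with rfl | rfl <;> subst hyx <;> decide

set_option linter.unreachableTactic false in
set_option linter.unusedTactic false in
lemma st1_cond (x y z w : ℤ)
    (hx : x = 1 ∨ x = -1) (hy : y = 1 ∨ y = -1) (hz : z = 1 ∨ z = -1) (hw : w = 1 ∨ w = -1)
    (h : x * y + z * w = 0) :
    ((decide (x = 1) == decide (y = 1)) != (decide (z = 1) == decide (w = 1))) = true := by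
  rcases hx with rfl | rfl <;> rcases hy with rfl | rfl <;> rcases hz with rfl | rfl <;>
    rcases hw with rfl | rfl <;> first | decide | (exfalso; omega)

/-- if `(O_F, 1, ε)` is a composition algebra, then either every future is a
line or every past is a line. -/
theorem stmt_1 (𝔽 : Type*) [Field 𝔽] (hchar : (2 : 𝔽) ≠ 0)
    (ε : V → V → ℤ) (hε : IsMulFactor ε)
    (hcomp : IsCompAlg 𝔽 (fun _ => 1) ε) :
    (∀ P : V, P ≠ 0 → IsLine (Future ε P)) ∨ (∀ P : V, P ≠ 0 → IsLine (Past ε P)) := by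

  obtain ⟨hskew, hzero⟩ := hε
  have hanti : ∀ a b : V, a ≠ 0 → b ≠ 0 → a ≠ b → ε b a = -ε a b :=
    fun a b ha hb hab => (hskew a b ha hb hab).2
  have hpmV : ∀ a b : V, a ≠ 0 → b ≠ 0 → a ≠ b → (ε a b = 1 ∨ ε a b = -1) :=
    fun a b ha hb hab => (hskew a b ha hb hab).1
  have hpm : ∀ i j : Fin 7, i ≠ j → (ε (st1_pt i) (st1_pt j) = 1 ∨ ε (st1_pt i) (st1_pt j) = -1) :=
    fun i j hij => hpmV _ _ (st1_pt_ne i) (st1_pt_ne j) (fun h => hij (st1_pt_inj _ _ h))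
  have hcyc : ∀ a b c : V, a ≠ 0 → b ≠ 0 → c ≠ 0 → a ≠ b → a ≠ c → b ≠ c → a + b + c = 0 →
      ε a b = ε b c ∧ ε b c = ε c a := by
    intro a b c ha hb hc hab hac hbc hsum
    have h1 : ε b c = -ε b a := st1_C1 𝔽 hchar ε hcomp b c a hb hc ha hbc (Ne.symm hab)
      (Ne.symm hac) (st1_perm3' a b c hsum) (hpmV b c hb hc hbc) (hpmV b a hb ha (Ne.symm hab))
    have h2 : ε b a = -ε a b := hanti a b ha hb hab
    have h3 : ε c a = -ε c b := st1_C1 𝔽 hchar ε hcomp c a b hc ha hb (Ne.symm hac)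
      (Ne.symm hbc) hab (st1_perm3'' a b c hsum) (hpmV c a hc ha (Ne.symm hac)) (hpmV c b hc hb (Ne.symm hbc))
    have h4 : ε c b = -ε b c := hanti b c hb hc hbc
    omega
  have hLine : ∀ k : Fin 7,
      ε (st1_pt (st1_lns k).1) (st1_pt (st1_lns k).2.1) = ε (st1_pt (st1_lns k).2.1) (st1_pt (st1_lns k).2.2) ∧
      ε (st1_pt (st1_lns k).2.1) (st1_pt (st1_lns k).2.2) = ε (st1_pt (st1_lns k).2.2) (st1_pt (st1_lns k).1) :=
    fun k => hcyc _ _ _ (st1_pt_ne _) (st1_pt_ne _) (st1_pt_ne _)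
      (st1_lns_d1 k) (st1_lns_d2 k) (st1_lns_d3 k) (st1_lns_sum k)
  have hE : ∀ i j : Fin 7, i ≠ j →
      st1_E (st1_sOf ε) i j = decide (ε (st1_pt i) (st1_pt j) = 1) := by
    intro i j hij
    fin_cases i <;> fin_cases j
    · exact absurd rfl hij
    · rfl
    · exact st1_negdec _ _ (hpm 0 1 (by decide))
        ((hanti (st1_pt 2) (st1_pt 0) (st1_pt_ne 2) (st1_pt_ne 0) (by decide)).trans
          (congrArg Neg.neg (((hLine 0).1.trans (hLine 0).2)).symm))
    · rfl
    · exact st1_negdec _ _ (hpm 0 3 (by decide))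
        ((hanti (st1_pt 4) (st1_pt 0) (st1_pt_ne 4) (st1_pt_ne 0) (by decide)).trans
          (congrArg Neg.neg (((hLine 1).1.trans (hLine 1).2)).symm))
    · rfl
    · exact st1_negdec _ _ (hpm 0 5 (by decide))
        ((hanti (st1_pt 6) (st1_pt 0) (st1_pt_ne 6) (st1_pt_ne 0) (by decide)).trans
          (congrArg Neg.neg (((hLine 2).1.trans (hLine 2).2)).symm))
    · exact st1_negdec _ _ (hpm 0 1 (by decide))
        ((hanti (st1_pt 0) (st1_pt 1) (st1_pt_ne 0) (st1_pt_ne 1) (by decide)).trans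
          (congrArg Neg.neg (rfl).symm))
    · exact absurd rfl hij
    · exact congrArg (fun z => decide (z = 1)) (hLine 0).1
    · rfl
    · rfl
    · exact st1_negdec _ _ (hpm 1 3 (by decide))
        ((hanti (st1_pt 5) (st1_pt 1) (st1_pt_ne 5) (st1_pt_ne 1) (by decide)).trans
          (congrArg Neg.neg (((hLine 3).1.trans (hLine 3).2)).symm))
    · exact st1_negdec _ _ (hpm 1 4 (by decide))
        ((hanti (st1_pt 6) (st1_pt 1) (st1_pt_ne 6) (st1_pt_ne 1) (by decide)).trans
          (congrArg Neg.neg (((hLine 4).1.trans (hLine 4).2)).symm))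
    · exact congrArg (fun z => decide (z = 1)) ((hLine 0).1.trans (hLine 0).2)
    · exact st1_negdec _ _ (hpm 0 1 (by decide))
        ((hanti (st1_pt 1) (st1_pt 2) (st1_pt_ne 1) (st1_pt_ne 2) (by decide)).trans
          (congrArg Neg.neg ((hLine 0).1).symm))
    · exact absurd rfl hij
    · rfl
    · rfl
    · exact st1_negdec _ _ (hpm 2 4 (by decide))
        ((hanti (st1_pt 5) (st1_pt 2) (st1_pt_ne 5) (st1_pt_ne 2) (by decide)).trans
          (congrArg Neg.neg (((hLine 6).1.trans (hLine 6).2)).symm))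
    · exact st1_negdec _ _ (hpm 2 3 (by decide))
        ((hanti (st1_pt 6) (st1_pt 2) (st1_pt_ne 6) (st1_pt_ne 2) (by decide)).trans
          (congrArg Neg.neg (((hLine 5).1.trans (hLine 5).2)).symm))
    · exact st1_negdec _ _ (hpm 0 3 (by decide))
        ((hanti (st1_pt 0) (st1_pt 3) (st1_pt_ne 0) (st1_pt_ne 3) (by decide)).trans
          (congrArg Neg.neg (rfl).symm))
    · exact st1_negdec _ _ (hpm 1 3 (by decide))
        ((hanti (st1_pt 1) (st1_pt 3) (st1_pt_ne 1) (st1_pt_ne 3) (by decide)).trans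
          (congrArg Neg.neg (rfl).symm))
    · exact st1_negdec _ _ (hpm 2 3 (by decide))
        ((hanti (st1_pt 2) (st1_pt 3) (st1_pt_ne 2) (st1_pt_ne 3) (by decide)).trans
          (congrArg Neg.neg (rfl).symm))
    · exact absurd rfl hij
    · exact congrArg (fun z => decide (z = 1)) (hLine 1).1
    · exact congrArg (fun z => decide (z = 1)) (hLine 3).1
    · exact congrArg (fun z => decide (z = 1)) (hLine 5).1
    · exact congrArg (fun z => decide (z = 1)) ((hLine 1).1.trans (hLine 1).2)
    · exact st1_negdec _ _ (hpm 1 4 (by decide))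
        ((hanti (st1_pt 1) (st1_pt 4) (st1_pt_ne 1) (st1_pt_ne 4) (by decide)).trans
          (congrArg Neg.neg (rfl).symm))
    · exact st1_negdec _ _ (hpm 2 4 (by decide))
        ((hanti (st1_pt 2) (st1_pt 4) (st1_pt_ne 2) (st1_pt_ne 4) (by decide)).trans
          (congrArg Neg.neg (rfl).symm))
    · exact st1_negdec _ _ (hpm 0 3 (by decide))
        ((hanti (st1_pt 3) (st1_pt 4) (st1_pt_ne 3) (st1_pt_ne 4) (by decide)).trans
          (congrArg Neg.neg ((hLine 1).1).symm))
    · exact absurd rfl hij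
    · exact congrArg (fun z => decide (z = 1)) (hLine 6).1
    · exact congrArg (fun z => decide (z = 1)) (hLine 4).1
    · exact st1_negdec _ _ (hpm 0 5 (by decide))
        ((hanti (st1_pt 0) (st1_pt 5) (st1_pt_ne 0) (st1_pt_ne 5) (by decide)).trans
          (congrArg Neg.neg (rfl).symm))
    · exact congrArg (fun z => decide (z = 1)) ((hLine 3).1.trans (hLine 3).2)
    · exact congrArg (fun z => decide (z = 1)) ((hLine 6).1.trans (hLine 6).2)
    · exact st1_negdec _ _ (hpm 1 3 (by decide))
        ((hanti (st1_pt 3) (st1_pt 5) (st1_pt_ne 3) (st1_pt_ne 5) (by decide)).trans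
          (congrArg Neg.neg ((hLine 3).1).symm))
    · exact st1_negdec _ _ (hpm 2 4 (by decide))
        ((hanti (st1_pt 4) (st1_pt 5) (st1_pt_ne 4) (st1_pt_ne 5) (by decide)).trans
          (congrArg Neg.neg ((hLine 6).1).symm))
    · exact absurd rfl hij
    · exact congrArg (fun z => decide (z = 1)) (hLine 2).1
    · exact congrArg (fun z => decide (z = 1)) ((hLine 2).1.trans (hLine 2).2)
    · exact congrArg (fun z => decide (z = 1)) ((hLine 4).1.trans (hLine 4).2)
    · exact congrArg (fun z => decide (z = 1)) ((hLine 5).1.trans (hLine 5).2)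
    · exact st1_negdec _ _ (hpm 2 3 (by decide))
        ((hanti (st1_pt 3) (st1_pt 6) (st1_pt_ne 3) (st1_pt_ne 6) (by decide)).trans
          (congrArg Neg.neg ((hLine 5).1).symm))
    · exact st1_negdec _ _ (hpm 1 4 (by decide))
        ((hanti (st1_pt 4) (st1_pt 6) (st1_pt_ne 4) (st1_pt_ne 6) (by decide)).trans
          (congrArg Neg.neg ((hLine 4).1).symm))
    · exact st1_negdec _ _ (hpm 0 5 (by decide))
        ((hanti (st1_pt 5) (st1_pt 6) (st1_pt_ne 5) (st1_pt_ne 6) (by decide)).trans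
          (congrArg Neg.neg ((hLine 2).1).symm))
    · exact absurd rfl hij
  have hq : ∀ k : Fin 7, st1_Q2 (st1_sOf ε) k = true := by
    intro k
    fin_cases k
    · change (((st1_E (st1_sOf ε) 3 5 == st1_E (st1_sOf ε) 4 6)
          != (st1_E (st1_sOf ε) 3 6 == st1_E (st1_sOf ε) 4 5))
        && ((st1_E (st1_sOf ε) 3 4 == st1_E (st1_sOf ε) 5 6)
          != (st1_E (st1_sOf ε) 3 6 == st1_E (st1_sOf ε) 5 4))) = true
      rw [hE 3 5 (by decide), hE 4 6 (by decide), hE 3 6 (by decide), hE 4 5 (by decide), hE 3 4 (by decide), hE 5 6 (by decide), hE 5 4 (by decide)]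
      rw [Bool.and_eq_true]
      exact
        ⟨st1_cond _ _ _ _ (hpm 3 5 (by decide)) (hpm 4 6 (by decide)) (hpm 3 6 (by decide)) (hpm 4 5 (by decide))
          (st1_C2 𝔽 hchar ε hcomp (st1_pt 3) (st1_pt 4) (st1_pt 5) (st1_pt 6) (st1_pt_ne _) (st1_pt_ne _) (st1_pt_ne _) (st1_pt_ne _) (by decide) (by decide) (by decide) (by decide) (by decide) (by decide) (by decide) (hpm 3 5 (by decide)) (hpm 4 6 (by decide)) (hpm 3 6 (by decide)) (hpm 4 5 (by decide))),
         st1_cond _ _ _ _ (hpm 3 4 (by decide)) (hpm 5 6 (by decide)) (hpm 3 6 (by decide)) (hpm 5 4 (by decide))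
          (st1_C2 𝔽 hchar ε hcomp (st1_pt 3) (st1_pt 5) (st1_pt 4) (st1_pt 6) (st1_pt_ne _) (st1_pt_ne _) (st1_pt_ne _) (st1_pt_ne _) (by decide) (by decide) (by decide) (by decide) (by decide) (by decide) (by decide) (hpm 3 4 (by decide)) (hpm 5 6 (by decide)) (hpm 3 6 (by decide)) (hpm 5 4 (by decide)))⟩
    · change (((st1_E (st1_sOf ε) 1 5 == st1_E (st1_sOf ε) 2 6)
          != (st1_E (st1_sOf ε) 1 6 == st1_E (st1_sOf ε) 2 5))
        && ((st1_E (st1_sOf ε) 1 2 == st1_E (st1_sOf ε) 5 6)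
          != (st1_E (st1_sOf ε) 1 6 == st1_E (st1_sOf ε) 5 2))) = true
      rw [hE 1 5 (by decide), hE 2 6 (by decide), hE 1 6 (by decide), hE 2 5 (by decide), hE 1 2 (by decide), hE 5 6 (by decide), hE 5 2 (by decide)]
      rw [Bool.and_eq_true]
      exact
        ⟨st1_cond _ _ _ _ (hpm 1 5 (by decide)) (hpm 2 6 (by decide)) (hpm 1 6 (by decide)) (hpm 2 5 (by decide))
          (st1_C2 𝔽 hchar ε hcomp (st1_pt 1) (st1_pt 2) (st1_pt 5) (st1_pt 6) (st1_pt_ne _) (st1_pt_ne _) (st1_pt_ne _) (st1_pt_ne _) (by decide) (by decide) (by decide) (by decide) (by decide) (by decide) (by decide) (hpm 1 5 (by decide)) (hpm 2 6 (by decide)) (hpm 1 6 (by decide)) (hpm 2 5 (by decide))),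
         st1_cond _ _ _ _ (hpm 1 2 (by decide)) (hpm 5 6 (by decide)) (hpm 1 6 (by decide)) (hpm 5 2 (by decide))
          (st1_C2 𝔽 hchar ε hcomp (st1_pt 1) (st1_pt 5) (st1_pt 2) (st1_pt 6) (st1_pt_ne _) (st1_pt_ne _) (st1_pt_ne _) (st1_pt_ne _) (by decide) (by decide) (by decide) (by decide) (by decide) (by decide) (by decide) (hpm 1 2 (by decide)) (hpm 5 6 (by decide)) (hpm 1 6 (by decide)) (hpm 5 2 (by decide)))⟩
    · change (((st1_E (st1_sOf ε) 1 3 == st1_E (st1_sOf ε) 2 4)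
          != (st1_E (st1_sOf ε) 1 4 == st1_E (st1_sOf ε) 2 3))
        && ((st1_E (st1_sOf ε) 1 2 == st1_E (st1_sOf ε) 3 4)
          != (st1_E (st1_sOf ε) 1 4 == st1_E (st1_sOf ε) 3 2))) = true
      rw [hE 1 3 (by decide), hE 2 4 (by decide), hE 1 4 (by decide), hE 2 3 (by decide), hE 1 2 (by decide), hE 3 4 (by decide), hE 3 2 (by decide)]
      rw [Bool.and_eq_true]
      exact
        ⟨st1_cond _ _ _ _ (hpm 1 3 (by decide)) (hpm 2 4 (by decide)) (hpm 1 4 (by decide)) (hpm 2 3 (by decide))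
          (st1_C2 𝔽 hchar ε hcomp (st1_pt 1) (st1_pt 2) (st1_pt 3) (st1_pt 4) (st1_pt_ne _) (st1_pt_ne _) (st1_pt_ne _) (st1_pt_ne _) (by decide) (by decide) (by decide) (by decide) (by decide) (by decide) (by decide) (hpm 1 3 (by decide)) (hpm 2 4 (by decide)) (hpm 1 4 (by decide)) (hpm 2 3 (by decide))),
         st1_cond _ _ _ _ (hpm 1 2 (by decide)) (hpm 3 4 (by decide)) (hpm 1 4 (by decide)) (hpm 3 2 (by decide))
          (st1_C2 𝔽 hchar ε hcomp (st1_pt 1) (st1_pt 3) (st1_pt 2) (st1_pt 4) (st1_pt_ne _) (st1_pt_ne _) (st1_pt_ne _) (st1_pt_ne _) (by decide) (by decide) (by decide) (by decide) (by decide) (by decide) (by decide) (hpm 1 2 (by decide)) (hpm 3 4 (by decide)) (hpm 1 4 (by decide)) (hpm 3 2 (by decide)))⟩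
    · change (((st1_E (st1_sOf ε) 0 4 == st1_E (st1_sOf ε) 2 6)
          != (st1_E (st1_sOf ε) 0 6 == st1_E (st1_sOf ε) 2 4))
        && ((st1_E (st1_sOf ε) 0 2 == st1_E (st1_sOf ε) 4 6)
          != (st1_E (st1_sOf ε) 0 6 == st1_E (st1_sOf ε) 4 2))) = true
      rw [hE 0 4 (by decide), hE 2 6 (by decide), hE 0 6 (by decide), hE 2 4 (by decide), hE 0 2 (by decide), hE 4 6 (by decide), hE 4 2 (by decide)]
      rw [Bool.and_eq_true]
      exact
        ⟨st1_cond _ _ _ _ (hpm 0 4 (by decide)) (hpm 2 6 (by decide)) (hpm 0 6 (by decide)) (hpm 2 4 (by decide))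
          (st1_C2 𝔽 hchar ε hcomp (st1_pt 0) (st1_pt 2) (st1_pt 4) (st1_pt 6) (st1_pt_ne _) (st1_pt_ne _) (st1_pt_ne _) (st1_pt_ne _) (by decide) (by decide) (by decide) (by decide) (by decide) (by decide) (by decide) (hpm 0 4 (by decide)) (hpm 2 6 (by decide)) (hpm 0 6 (by decide)) (hpm 2 4 (by decide))),
         st1_cond _ _ _ _ (hpm 0 2 (by decide)) (hpm 4 6 (by decide)) (hpm 0 6 (by decide)) (hpm 4 2 (by decide))
          (st1_C2 𝔽 hchar ε hcomp (st1_pt 0) (st1_pt 4) (st1_pt 2) (st1_pt 6) (st1_pt_ne _) (st1_pt_ne _) (st1_pt_ne _) (st1_pt_ne _) (by decide) (by decide) (by decide) (by decide) (by decide) (by decide) (by decide) (hpm 0 2 (by decide)) (hpm 4 6 (by decide)) (hpm 0 6 (by decide)) (hpm 4 2 (by decide)))⟩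
    · change (((st1_E (st1_sOf ε) 0 3 == st1_E (st1_sOf ε) 2 5)
          != (st1_E (st1_sOf ε) 0 5 == st1_E (st1_sOf ε) 2 3))
        && ((st1_E (st1_sOf ε) 0 2 == st1_E (st1_sOf ε) 3 5)
          != (st1_E (st1_sOf ε) 0 5 == st1_E (st1_sOf ε) 3 2))) = true
      rw [hE 0 3 (by decide), hE 2 5 (by decide), hE 0 5 (by decide), hE 2 3 (by decide), hE 0 2 (by decide), hE 3 5 (by decide), hE 3 2 (by decide)]
      rw [Bool.and_eq_true]
      exact
        ⟨st1_cond _ _ _ _ (hpm 0 3 (by decide)) (hpm 2 5 (by decide)) (hpm 0 5 (by decide)) (hpm 2 3 (by decide))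
          (st1_C2 𝔽 hchar ε hcomp (st1_pt 0) (st1_pt 2) (st1_pt 3) (st1_pt 5) (st1_pt_ne _) (st1_pt_ne _) (st1_pt_ne _) (st1_pt_ne _) (by decide) (by decide) (by decide) (by decide) (by decide) (by decide) (by decide) (hpm 0 3 (by decide)) (hpm 2 5 (by decide)) (hpm 0 5 (by decide)) (hpm 2 3 (by decide))),
         st1_cond _ _ _ _ (hpm 0 2 (by decide)) (hpm 3 5 (by decide)) (hpm 0 5 (by decide)) (hpm 3 2 (by decide))
          (st1_C2 𝔽 hchar ε hcomp (st1_pt 0) (st1_pt 3) (st1_pt 2) (st1_pt 5) (st1_pt_ne _) (st1_pt_ne _) (st1_pt_ne _) (st1_pt_ne _) (by decide) (by decide) (by decide) (by decide) (by decide) (by decide) (by decide) (hpm 0 2 (by decide)) (hpm 3 5 (by decide)) (hpm 0 5 (by decide)) (hpm 3 2 (by decide)))⟩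
    · change (((st1_E (st1_sOf ε) 0 4 == st1_E (st1_sOf ε) 1 5)
          != (st1_E (st1_sOf ε) 0 5 == st1_E (st1_sOf ε) 1 4))
        && ((st1_E (st1_sOf ε) 0 1 == st1_E (st1_sOf ε) 4 5)
          != (st1_E (st1_sOf ε) 0 5 == st1_E (st1_sOf ε) 4 1))) = true
      rw [hE 0 4 (by decide), hE 1 5 (by decide), hE 0 5 (by decide), hE 1 4 (by decide), hE 0 1 (by decide), hE 4 5 (by decide), hE 4 1 (by decide)]
      rw [Bool.and_eq_true]
      exact
        ⟨st1_cond _ _ _ _ (hpm 0 4 (by decide)) (hpm 1 5 (by decide)) (hpm 0 5 (by decide)) (hpm 1 4 (by decide))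
          (st1_C2 𝔽 hchar ε hcomp (st1_pt 0) (st1_pt 1) (st1_pt 4) (st1_pt 5) (st1_pt_ne _) (st1_pt_ne _) (st1_pt_ne _) (st1_pt_ne _) (by decide) (by decide) (by decide) (by decide) (by decide) (by decide) (by decide) (hpm 0 4 (by decide)) (hpm 1 5 (by decide)) (hpm 0 5 (by decide)) (hpm 1 4 (by decide))),
         st1_cond _ _ _ _ (hpm 0 1 (by decide)) (hpm 4 5 (by decide)) (hpm 0 5 (by decide)) (hpm 4 1 (by decide))
          (st1_C2 𝔽 hchar ε hcomp (st1_pt 0) (st1_pt 4) (st1_pt 1) (st1_pt 5) (st1_pt_ne _) (st1_pt_ne _) (st1_pt_ne _) (st1_pt_ne _) (by decide) (by decide) (by decide) (by decide) (by decide) (by decide) (by decide) (hpm 0 1 (by decide)) (hpm 4 5 (by decide)) (hpm 0 5 (by decide)) (hpm 4 1 (by decide)))⟩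
    · change (((st1_E (st1_sOf ε) 0 3 == st1_E (st1_sOf ε) 1 6)
          != (st1_E (st1_sOf ε) 0 6 == st1_E (st1_sOf ε) 1 3))
        && ((st1_E (st1_sOf ε) 0 1 == st1_E (st1_sOf ε) 3 6)
          != (st1_E (st1_sOf ε) 0 6 == st1_E (st1_sOf ε) 3 1))) = true
      rw [hE 0 3 (by decide), hE 1 6 (by decide), hE 0 6 (by decide), hE 1 3 (by decide), hE 0 1 (by decide), hE 3 6 (by decide), hE 3 1 (by decide)]
      rw [Bool.and_eq_true]
      exact
        ⟨st1_cond _ _ _ _ (hpm 0 3 (by decide)) (hpm 1 6 (by decide)) (hpm 0 6 (by decide)) (hpm 1 3 (by decide))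
          (st1_C2 𝔽 hchar ε hcomp (st1_pt 0) (st1_pt 1) (st1_pt 3) (st1_pt 6) (st1_pt_ne _) (st1_pt_ne _) (st1_pt_ne _) (st1_pt_ne _) (by decide) (by decide) (by decide) (by decide) (by decide) (by decide) (by decide) (hpm 0 3 (by decide)) (hpm 1 6 (by decide)) (hpm 0 6 (by decide)) (hpm 1 3 (by decide))),
         st1_cond _ _ _ _ (hpm 0 1 (by decide)) (hpm 3 6 (by decide)) (hpm 0 6 (by decide)) (hpm 3 1 (by decide))
          (st1_C2 𝔽 hchar ε hcomp (st1_pt 0) (st1_pt 3) (st1_pt 1) (st1_pt 6) (st1_pt_ne _) (st1_pt_ne _) (st1_pt_ne _) (st1_pt_ne _) (by decide) (by decide) (by decide) (by decide) (by decide) (by decide) (by decide) (hpm 0 1 (by decide)) (hpm 3 6 (by decide)) (hpm 0 6 (by decide)) (hpm 3 1 (by decide)))⟩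
  rcases st1_keyDecide (st1_sOf ε) hq with hf | hf
  · left
    intro P hP
    obtain ⟨i, rfl⟩ := st1_pt_surj P hP
    obtain ⟨k, hk⟩ := of_decide_eq_true (hf i)
    beta_reduce at hk
    have key : ∀ j : Fin 7, (decide (j ≠ i) && st1_E (st1_sOf ε) i j) = true →
        st1_pt j ≠ 0 ∧ st1_pt j ≠ st1_pt i ∧ ε (st1_pt i) (st1_pt j) = 1 := by
      intro j hbj
      rw [Bool.and_eq_true, decide_eq_true_eq] at hbj
      obtain ⟨hji, hEt⟩ := hbj
      rw [hE i j (fun h => hji h.symm)] at hEt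
      exact ⟨st1_pt_ne j, fun h => hji (st1_pt_inj _ _ h), of_decide_eq_true hEt⟩
    refine ⟨st1_pt (st1_lns k).1, st1_pt (st1_lns k).2.1, st1_pt (st1_lns k).2.2,
      st1_pt_ne _, st1_pt_ne _, st1_pt_ne _, st1_lns_d1 k, st1_lns_d2 k, st1_lns_d3 k,
      st1_lns_sum k, ?_⟩
    ext Q
    simp only [Future, Set.mem_setOf_eq, Set.mem_insert_iff, Set.mem_singleton_iff]
    constructor
    · rintro ⟨hQ0, hQP, hε1⟩
      obtain ⟨j, rfl⟩ := st1_pt_surj Q hQ0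
      have hji : j ≠ i := fun h => hQP (congrArg st1_pt h)
      have hbj : (decide (j ≠ i) && st1_E (st1_sOf ε) i j) = true := by
        rw [Bool.and_eq_true, decide_eq_true_eq, hE i j (fun h => hji h.symm)]
        exact ⟨hji, decide_eq_true hε1⟩
      rw [hk j] at hbj
      simp only [Bool.or_eq_true, decide_eq_true_eq] at hbj
      rcases hbj with (h | h) | h
      · exact Or.inl (congrArg st1_pt h)
      · exact Or.inr (Or.inl (congrArg st1_pt h))
      · exact Or.inr (Or.inr (congrArg st1_pt h))
    · rintro (rfl | rfl | rfl)
      · exact key _ (by rw [hk]; simp)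
      · exact key _ (by rw [hk]; simp)
      · exact key _ (by rw [hk]; simp)
  · right
    intro P hP
    obtain ⟨i, rfl⟩ := st1_pt_surj P hP
    obtain ⟨k, hk⟩ := of_decide_eq_true (hf i)
    beta_reduce at hk
    have hEneg : ∀ j : Fin 7, j ≠ i → ((!st1_E (st1_sOf ε) i j) = true ↔ ε (st1_pt i) (st1_pt j) = -1) := by
      intro j hji
      rw [hE i j (fun h => hji h.symm), Bool.not_eq_true', decide_eq_false_iff_not]
      rcases hpm i j (fun h => hji h.symm) with h | h <;> rw [h] <;> simp
    have key : ∀ j : Fin 7, (decide (j ≠ i) && !st1_E (st1_sOf ε) i j) = true →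
        st1_pt j ≠ 0 ∧ st1_pt j ≠ st1_pt i ∧ ε (st1_pt i) (st1_pt j) = -1 := by
      intro j hbj
      rw [Bool.and_eq_true, decide_eq_true_eq] at hbj
      obtain ⟨hji, hEt⟩ := hbj
      exact ⟨st1_pt_ne j, fun h => hji (st1_pt_inj _ _ h), (hEneg j hji).mp hEt⟩
    refine ⟨st1_pt (st1_lns k).1, st1_pt (st1_lns k).2.1, st1_pt (st1_lns k).2.2,
      st1_pt_ne _, st1_pt_ne _, st1_pt_ne _, st1_lns_d1 k, st1_lns_d2 k, st1_lns_d3 k,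
      st1_lns_sum k, ?_⟩
    ext Q
    simp only [Past, Set.mem_setOf_eq, Set.mem_insert_iff, Set.mem_singleton_iff]
    constructor
    · rintro ⟨hQ0, hQP, hε1⟩
      obtain ⟨j, rfl⟩ := st1_pt_surj Q hQ0
      have hji : j ≠ i := fun h => hQP (congrArg st1_pt h)
      have hbj : (decide (j ≠ i) && !st1_E (st1_sOf ε) i j) = true := by
        rw [Bool.and_eq_true, decide_eq_true_eq]
        exact ⟨hji, (hEneg j hji).mpr hε1⟩
      rw [hk j] at hbj
      simp only [Bool.or_eq_true, decide_eq_true_eq] at hbj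
      rcases hbj with (h | h) | h
      · exact Or.inl (congrArg st1_pt h)
      · exact Or.inr (Or.inl (congrArg st1_pt h))
      · exact Or.inr (Or.inr (congrArg st1_pt h))
    · rintro (rfl | rfl | rfl)
      · exact key _ (by rw [hk]; simp)
      · exact key _ (by rw [hk]; simp)
      · exact key _ (by rw [hk]; simp)
end

section
/- Assume ε satisfies the composition conditions. Then two quadrilaterals 𝒬_1, 𝒬_2 in F are equal if and only if their distinguished points are equal. -/
open Finset

/-! Let `P` be the distinguished point of a quadrilateral `S`. Condition (C2), applied to `P`
followed by the oriented triangle `S \ {P}`, shows that `ε P` takes a single sign on `S \ {P}`;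
condition (C1) shows that `ε P (P + U) = -ε P U`. Since `S \ {P} = {a, b, c}` with
`a + b + c = P`, the six nonzero points other than `P` are `a, b, c` and `P + a, P + b, P + c`, so
`S \ {P}` is the future or the past of `P`. It cannot be the future for one quadrilateral and the
past for another: the past would then contain `P + a`, `P + b` and their sum `P + c`, a line.
Finally, a vertex of an oriented triangle sees its two neighbours with opposite signs, so it
cannot be a second distinguished point of `S`. -/

set_option synthInstance.maxSize 256 in
theorem V.eq_sum_of_independent :
    ∀ a b c x : V, a ≠ 0 → b ≠ 0 → a ≠ b → c ≠ 0 → c ≠ a → c ≠ b → c ≠ a + b →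
      x = 0 ∨ x = a ∨ x = b ∨ x = c ∨ x = a + b ∨ x = a + c ∨ x = b + c ∨ x = a + b + c := by
  decide

section Quad

variable {S : Set V}

theorem IsQuad.ne_zero (hS : IsQuad S) {x : V} (hx : x ∈ S) : x ≠ 0 := by
  obtain ⟨⟨p, q, r, t, hp, hq, hr, ht, -, -, -, -, -, -, rfl⟩, -⟩ := hS
  rcases hx with rfl | rfl | rfl | rfl <;> assumption

theorem IsQuad.add_notMem (hS : IsQuad S) {x y : V} (hx : x ∈ S) (hy : y ∈ S) (hxy : x ≠ y) :
    x + y ∉ S := by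
  intro hxy_mem
  refine hS.2 {x, y, x + y} ⟨x, y, x + y, hS.ne_zero hx, hS.ne_zero hy, hS.ne_zero hxy_mem,
    hxy, ?_, ?_, CharTwo.add_self_eq_zero _, rfl⟩ (by simp [Set.insert_subset_iff, *])
  · simpa using hS.ne_zero hy
  · simpa using hS.ne_zero hx

theorem IsQuad.eq_add_add (hS : IsQuad S) {a b c d : V} (ha : a ∈ S) (hb : b ∈ S) (hc : c ∈ S)
    (hd : d ∈ S) (hab : a ≠ b) (hac : a ≠ c) (had : a ≠ d) (hbc : b ≠ c) (hbd : b ≠ d)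
    (hcd : c ≠ d) : d = a + b + c := by
  have hab' := hS.add_notMem ha hb hab
  have hac' := hS.add_notMem ha hc hac
  have hbc' := hS.add_notMem hb hc hbc
  have hd0 := hS.ne_zero hd
  rcases V.eq_sum_of_independent a b c d (hS.ne_zero ha) (hS.ne_zero hb) hab (hS.ne_zero hc)
    hac.symm hbc.symm (fun h => hab' (h ▸ hc)) with h | h | h | h | h | h | h | h <;>
    subst h <;> first | rfl | contradiction

theorem IsQuad.add_add_eq (hS : IsQuad S) {P a b c : V} (hP : P ∈ S)
    (hT : S \ {P} = {a, b, c}) (hab : a ≠ b) (hac : a ≠ c) (hbc : b ≠ c) : a + b + c = P := by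
  have mem : a ∈ S \ {P} ∧ b ∈ S \ {P} ∧ c ∈ S \ {P} := by simp [hT]
  simp only [Set.mem_sdiff_singleton] at mem
  obtain ⟨⟨ha, haP⟩, ⟨hb, hbP⟩, ⟨hc, hcP⟩⟩ := mem
  exact (hS.eq_add_add ha hb hc hP hab hac haP hbc hbP hcP).symm

end Quad

section Signs

variable {ε : V → V → ℤ} {P Q : V}

theorem IsMulFactor.sign (hε : IsMulFactor ε) (hP : P ≠ 0) (hQ : Q ≠ 0) (hPQ : P ≠ Q) :
    ε P Q = 1 ∨ ε P Q = -1 :=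
  (hε.1 P Q hP hQ hPQ).1

theorem IsMulFactor.antisymm (hε : IsMulFactor ε) (hP : P ≠ 0) (hQ : Q ≠ 0) (hPQ : P ≠ Q) :
    ε Q P = -ε P Q :=
  (hε.1 P Q hP hQ hPQ).2

theorem IsMulFactor.ne_neg (hε : IsMulFactor ε) (hP : P ≠ 0) (hQ : Q ≠ 0) (hPQ : P ≠ Q) :
    ε P Q ≠ -ε P Q := by
  rcases hε.sign hP hQ hPQ with h | h <;> rw [h] <;> decide

theorem IsMulFactor.eps_ne_of_cyclic (hε : IsMulFactor ε) {a b c : V} (ha : a ≠ 0) (hc : c ≠ 0)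
    (hac : a ≠ c) (h₁ : ε a b = ε b c) (h₂ : ε b c = ε c a) : ε a b ≠ ε a c := by
  intro h
  refine hε.ne_neg ha hc hac ?_
  rw [← hε.antisymm ha hc hac, ← h₂, ← h₁, h]

theorem CompCond.eps_add_right (hε : IsMulFactor ε) (hc : CompCond ε) (hP : P ≠ 0) (hQ : Q ≠ 0)
    (hPQ : P ≠ Q) : ε P (P + Q) = -ε P Q := by
  have hR : P + Q ≠ 0 := fun h => hPQ (CharTwo.add_eq_zero.1 h)
  have hRP : P + Q ≠ P := fun h => hQ (by simpa using h)
  have hRQ : P + Q ≠ Q := fun h => hP (by simpa using h)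
  have e₁ := Int.eq_of_mul_eq_one <|
    hc.1 P Q (P + Q) hP hQ hR hPQ hRP.symm hRQ.symm (CharTwo.add_self_eq_zero _)
  have e₂ := Int.eq_of_mul_eq_one <| hc.1 Q (P + Q) P hQ hR hP hRQ.symm hPQ.symm hRP
    (by linear_combination CharTwo.add_self_eq_zero P + CharTwo.add_self_eq_zero Q)
  rw [e₁, e₂, hε.antisymm hP hR hRP.symm, neg_neg]

theorem CompCond.eps_eq_of_isQuad (hε : IsMulFactor ε) (hc : CompCond ε) {a b c : V}
    (hq : IsQuad {P, a, b, c}) (hPa : P ≠ a) (hPb : P ≠ b) (hPc : P ≠ c) (hab : a ≠ b)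
    (hac : a ≠ c) (hbc : b ≠ c) (h : ε a b = ε b c) : ε P a = ε P c := by
  have hP : P ≠ 0 := hq.ne_zero (by simp)
  have ha : a ≠ 0 := hq.ne_zero (by simp)
  have hb : b ≠ 0 := hq.ne_zero (by simp)
  have hc0 : c ≠ 0 := hq.ne_zero (by simp)
  have h₂ := hc.2 P a b c hP ha hb hc0 hPa hPb hPc hab hac hbc hq
  rw [← h, hε.antisymm hP hc0 hPc] at h₂
  have hsq : ε a b * ε a b = 1 := by rcases hε.sign ha hb hab with e | e <;> rw [e] <;> decide
  exact Int.eq_of_mul_eq_one (by linear_combination -h₂ - ε P a * ε P c * hsq)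

theorem CompCond.add_mem_past (hε : IsMulFactor ε) (hc : CompCond ε) (hP : P ≠ 0)
    (hQ : Q ∈ Future ε P) : P + Q ∈ Past ε P := by
  obtain ⟨hQ0, hQP, hPQ⟩ := hQ
  refine ⟨fun h => hQP (CharTwo.add_eq_zero.1 h).symm, fun h => hQ0 (by simpa using h), ?_⟩
  rw [hc.eps_add_right hε hP hQ0 hQP.symm, hPQ]

end Signs

namespace IsDistPt

variable {ε : V → V → ℤ} {S : Set V} {P : V}

theorem eps_eq (hε : IsMulFactor ε) (hc : CompCond ε) (hS : IsQuad S) (h : IsDistPt ε S P)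
    {U W : V} (hU : U ∈ S \ {P}) (hW : W ∈ S \ {P}) : ε P U = ε P W := by
  obtain ⟨hPS, -, a, b, c, hT, hab, hac, hbc, h₁, h₂⟩ := h
  have hq : IsQuad {P, a, b, c} := by rwa [← hT, Set.insert_sdiff_self_of_mem hPS]
  have hq' : IsQuad {P, b, c, a} := by
    convert hq using 1
    ext x
    simp only [Set.mem_insert_iff, Set.mem_singleton_iff]
    tauto
  have mem : a ∈ S \ {P} ∧ b ∈ S \ {P} ∧ c ∈ S \ {P} := by simp [hT]
  simp only [Set.mem_sdiff_singleton] at mem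
  obtain ⟨⟨-, haP⟩, ⟨-, hbP⟩, ⟨-, hcP⟩⟩ := mem
  have hca := hc.eps_eq_of_isQuad hε hq haP.symm hbP.symm hcP.symm hab hac hbc h₁
  have hba := hc.eps_eq_of_isQuad hε hq' hbP.symm hcP.symm haP.symm hbc hab.symm hac.symm h₂
  have key : ∀ x ∈ S \ {P}, ε P x = ε P a := by
    rw [hT]
    rintro x (rfl | rfl | rfl)
    exacts [rfl, hba, hca.symm]
  rw [key U hU, key W hW]

theorem unique (hε : IsMulFactor ε) (hc : CompCond ε) (hS : IsQuad S) {P' : V}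
    (h : IsDistPt ε S P) (h' : IsDistPt ε S P') : P = P' := by
  by_contra hne
  obtain ⟨-, -, a, b, c, hT, hab, hac, hbc, h₁, h₂⟩ := h'
  obtain ⟨⟨ha, -⟩, ⟨hb, -⟩, ⟨hc', -⟩⟩ : a ∈ S \ {P'} ∧ b ∈ S \ {P'} ∧ c ∈ S \ {P'} := by
    simp [hT]
  have ha0 := hS.ne_zero ha
  have hb0 := hS.ne_zero hb
  have hc0 := hS.ne_zero hc'
  have hP : P ∈ ({a, b, c} : Set V) := hT ▸ ⟨h.1, hne⟩
  rcases hP with rfl | rfl | rfl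
  · exact hε.eps_ne_of_cyclic ha0 hc0 hac h₁ h₂ <|
      h.eps_eq hε hc hS ⟨hb, hab.symm⟩ ⟨hc', hac.symm⟩
  · exact hε.eps_ne_of_cyclic hb0 ha0 hab.symm h₂ (h₁.trans h₂).symm <|
      h.eps_eq hε hc hS ⟨hc', hbc.symm⟩ ⟨ha, hab⟩
  · exact hε.eps_ne_of_cyclic hc0 hb0 hbc.symm (h₁.trans h₂).symm h₁ <|
      h.eps_eq hε hc hS ⟨ha, hac⟩ ⟨hb, hbc⟩

theorem diff_eq_future_or_past (hε : IsMulFactor ε) (hc : CompCond ε) (hS : IsQuad S)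
    (h : IsDistPt ε S P) : S \ {P} = Future ε P ∨ S \ {P} = Past ε P := by
  obtain ⟨a, b, c, ha0, hb0, hc0, hab, hac, hbc, habc, hT⟩ := h.2.1
  have hsum := hS.add_add_eq h.1 hT hab hac hbc
  obtain ⟨ha, hb, hc'⟩ : a ∈ S \ {P} ∧ b ∈ S \ {P} ∧ c ∈ S \ {P} := by simp [hT]
  have hP0 : P ≠ 0 := hS.ne_zero h.1
  have hPa : P + a = b + c := by linear_combination -hsum + CharTwo.add_self_eq_zero a
  have hPb : P + b = a + c := by linear_combination -hsum + CharTwo.add_self_eq_zero b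
  have hPc : P + c = a + b := by linear_combination -hsum + CharTwo.add_self_eq_zero c
  have haP : P ≠ a := fun e => ha.2 e.symm
  have hs : ∀ x ∈ S \ {P}, ε P x = ε P a := fun x hx => h.eps_eq hε hc hS hx ha
  have opp : ∀ x ∈ S \ {P}, ε P (P + x) ≠ ε P a := fun x hx => by
    rw [hc.eps_add_right hε hP0 (hS.ne_zero hx.1) (fun e => hx.2 e.symm), hs x hx]
    exact (hε.ne_neg hP0 (hS.ne_zero ha.1) haP).symm
  suffices e : S \ {P} = {Q | Q ≠ 0 ∧ Q ≠ P ∧ ε P Q = ε P a} by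
    rcases hε.sign hP0 ha0 haP with hs | hs
    · exact .inl (e.trans (by rw [hs]; rfl))
    · exact .inr (e.trans (by rw [hs]; rfl))
  ext Q
  refine ⟨fun hQ => ⟨hS.ne_zero hQ.1, hQ.2, hs Q hQ⟩, fun ⟨hQ0, hQP, hQa⟩ => ?_⟩
  rcases V.eq_sum_of_independent a b c Q ha0 hb0 hab hc0 hac.symm hbc.symm
    (fun e => habc (by rw [e]; exact CharTwo.add_self_eq_zero _)) with
    rfl | rfl | rfl | rfl | rfl | rfl | rfl | rfl
  · exact absurd rfl hQ0
  · exact ha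
  · exact hb
  · exact hc'
  · exact (opp c hc' (by rwa [hPc])).elim
  · exact (opp b hb (by rwa [hPb])).elim
  · exact (opp a ha (by rwa [hPa])).elim
  · exact absurd hsum hQP

theorem diff_ne_past_of_eq_future (hε : IsMulFactor ε) (hc : CompCond ε) (hS : IsQuad S)
    (h : IsDistPt ε S P) {S' : Set V} (hS' : IsQuad S') (hF : S \ {P} = Future ε P) :
    S' \ {P} ≠ Past ε P := by
  intro hPast
  obtain ⟨a, b, c, -, -, -, hab, hac, hbc, -, hT⟩ := h.2.1
  have hsum := hS.add_add_eq h.1 hT hab hac hbc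
  have hP0 := hS.ne_zero h.1
  have past : ∀ x ∈ ({a, b, c} : Set V), P + x ∈ S' := fun x hx => by
    have hxF : x ∈ Future ε P := by rwa [← hF, hT]
    have hxP := hc.add_mem_past hε hP0 hxF
    rw [← hPast] at hxP
    exact hxP.1
  refine hS'.add_notMem (past a (by simp)) (past b (by simp)) (by simpa using hab) ?_
  rw [show P + a + (P + b) = P + c by
    linear_combination hsum + CharTwo.add_self_eq_zero P - CharTwo.add_self_eq_zero c]
  exact past c (by simp)

end IsDistPt

/-- under the composition conditions, two quadrilaterals are equal iff their
distinguished points are equal. -/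
theorem stmt_4 (ε : V → V → ℤ) (hε : IsMulFactor ε) (hc : CompCond ε)
    (S₁ S₂ : Set V) (hS₁ : IsQuad S₁) (hS₂ : IsQuad S₂)
    (P₁ P₂ : V) (h₁ : IsDistPt ε S₁ P₁) (h₂ : IsDistPt ε S₂ P₂) :
    S₁ = S₂ ↔ P₁ = P₂ := by
  refine ⟨fun hS => ?_, fun hP => ?_⟩
  · subst hS
    exact h₁.unique hε hc hS₁ h₂
  · subst hP
    have hdiff : S₁ \ {P₁} = S₂ \ {P₁} := by
      rcases h₁.diff_eq_future_or_past hε hc hS₁ with e₁ | e₁ <;>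
        rcases h₂.diff_eq_future_or_past hε hc hS₂ with e₂ | e₂
      · rw [e₁, e₂]
      · exact absurd e₂ (h₁.diff_ne_past_of_eq_future hε hc hS₁ hS₂ e₁)
      · exact absurd e₁ (h₂.diff_ne_past_of_eq_future hε hc hS₂ hS₁ e₂)
      · rw [e₁, e₂]
    rw [← Set.insert_sdiff_self_of_mem h₁.1, hdiff, Set.insert_sdiff_self_of_mem h₂.1]
end

section
/- Assume ε satisfies the composition conditions. Let 𝒬_1 ≠ 𝒬_2 be quadrilaterals in F with oriented triangles T_1, T_2 and distinguished points P_1, P_2. Then T_1 ∩ T_2 consists of exactly one point if and only if 𝒬_1 ∩ 𝒬_2 contains exactly one of P_1 and P_2. -/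
open Finset

lemma vadd (v : V) : v + v = 0 := by
  funext i
  have : ∀ a : ZMod 2, a + a = 0 := by decide
  exact this (v i)

lemma addV_eq_zero (a b : V) : a + b = 0 ↔ a = b := by
  constructor
  · intro h
    have h2 : a + b + b = 0 + b := by rw [h]
    rwa [add_assoc, vadd, add_zero, zero_add] at h2
  · rintro rfl; exact vadd _

lemma addV_right_eq (a b : V) : a + b = a ↔ b = 0 := by
  constructor
  · intro h
    have h2 : a + (a + b) = a + a := by rw [h]
    rwa [← add_assoc, vadd, zero_add] at h2
  · rintro rfl; rw [add_zero]

lemma addV_left_eq (a b : V) : a + b = b ↔ a = 0 := by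
  rw [add_comm]; exact addV_right_eq b a

lemma add_ne3 {a b c : V} (h : a + b + c ≠ 0) : a + b ≠ c := by
  intro he; exact h (by rw [he]; exact vadd c)

set_option synthInstance.maxSize 400 in
set_option maxHeartbeats 1000000 in
lemma quad_sum : ∀ p q r t : V, p ≠ q → p ≠ r → p ≠ t → q ≠ r → q ≠ t → r ≠ t →
    p ≠ 0 → q ≠ 0 → r ≠ 0 → t ≠ 0 →
    p+q+r ≠ 0 → p+q+t ≠ 0 → p+r+t ≠ 0 → q+r+t ≠ 0 → p+q+r+t = 0 := by decide

lemma sum3_perm (u v w x y z : V) (huv : u ≠ v) (huw : u ≠ w) (hvw : v ≠ w)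
    (hu : u = x ∨ u = y ∨ u = z) (hv : v = x ∨ v = y ∨ v = z)
    (hw : w = x ∨ w = y ∨ w = z) : u + v + w = x + y + z := by
  rcases hu with rfl|rfl|rfl <;> rcases hv with rfl|rfl|rfl <;> rcases hw with rfl|rfl|rfl <;>
    first
      | exact absurd rfl huv
      | exact absurd rfl huw
      | exact absurd rfl hvw
      | abel

lemma sign_eq {x y : ℤ} (hx : x = 1 ∨ x = -1) (hy : y = 1 ∨ y = -1)
    (h : x * y = 1) : x = y := by
  rcases hx with rfl|rfl <;> rcases hy with rfl|rfl <;> first | rfl | (revert h; decide)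

lemma sign_neg_mul {x y : ℤ} (hx : x = 1 ∨ x = -1) (hy : y = 1 ∨ y = -1)
    (h : -x * y = 1) : y = -x := by
  rcases hx with rfl|rfl <;> rcases hy with rfl|rfl <;> first | rfl | (revert h; decide)

lemma sign4_s5 {x s y : ℤ} (hx : x = 1 ∨ x = -1) (hs : s = 1 ∨ s = -1) (hy : y = 1 ∨ y = -1)
    (h : x * s * s * -y = -1) : x = y := by
  rcases hx with rfl|rfl <;> rcases hs with rfl|rfl <;> rcases hy with rfl|rfl <;>
    first | rfl | (revert h; decide)

lemma sign4' {x s y : ℤ} (hx : x = 1 ∨ x = -1) (hs : s = 1 ∨ s = -1) (hy : y = 1 ∨ y = -1)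
    (h : x * -s * -s * -y = -1) : x = y := by
  rcases hx with rfl|rfl <;> rcases hs with rfl|rfl <;> rcases hy with rfl|rfl <;>
    first | rfl | (revert h; decide)

lemma sign_ne {x : ℤ} (hx : x = 1 ∨ x = -1) (h : x = -x) : False := by
  rcases hx with rfl|rfl <;> revert h <;> decide
lemma nine_distinct (x1 x2 x3 x4 x5 x6 x7 x8 x9 : V)
    (h12 : x1 ≠ x2) (h13 : x1 ≠ x3) (h14 : x1 ≠ x4) (h15 : x1 ≠ x5) (h16 : x1 ≠ x6) (h17 : x1 ≠ x7) (h18 : x1 ≠ x8) (h19 : x1 ≠ x9) (h23 : x2 ≠ x3) (h24 : x2 ≠ x4) (h25 : x2 ≠ x5) (h26 : x2 ≠ x6) (h27 : x2 ≠ x7) (h28 : x2 ≠ x8) (h29 : x2 ≠ x9) (h34 : x3 ≠ x4) (h35 : x3 ≠ x5) (h36 : x3 ≠ x6) (h37 : x3 ≠ x7) (h38 : x3 ≠ x8) (h39 : x3 ≠ x9) (h45 : x4 ≠ x5) (h46 : x4 ≠ x6) (h47 : x4 ≠ x7) (h48 : x4 ≠ x8) (h49 : x4 ≠ x9) (h56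 : x5 ≠ x6) (h57 : x5 ≠ x7) (h58 : x5 ≠ x8) (h59 : x5 ≠ x9) (h67 : x6 ≠ x7) (h68 : x6 ≠ x8) (h69 : x6 ≠ x9) (h78 : x7 ≠ x8) (h79 : x7 ≠ x9) (h89 : x8 ≠ x9) : False := by
  have h9 : ({x1, x2, x3, x4, x5, x6, x7, x8, x9} : Finset V).card = 9 := by
    rw [Finset.card_insert_of_notMem (by simp [*])]
    rw [Finset.card_insert_of_notMem (by simp [*])]
    rw [Finset.card_insert_of_notMem (by simp [*])]
    rw [Finset.card_insert_of_notMem (by simp [*])]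
    rw [Finset.card_insert_of_notMem (by simp [*])]
    rw [Finset.card_insert_of_notMem (by simp [*])]
    rw [Finset.card_insert_of_notMem (by simp [*])]
    rw [Finset.card_insert_of_notMem (by simp [*])]
    simp
  have hle := Finset.card_le_univ ({x1, x2, x3, x4, x5, x6, x7, x8, x9} : Finset V)
  rw [h9] at hle
  have hV : Fintype.card V = 8 := by simp
  omega
lemma quad_nonzero {S : Set V} (hS : IsQuad S) : ∀ x ∈ S, x ≠ 0 := by
  obtain ⟨⟨p,q,r,t,hp,hq,hr,ht,_,_,_,_,_,_,rfl⟩, -⟩ := hS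
  intro x hx
  simp only [Set.mem_insert_iff, Set.mem_singleton_iff] at hx
  rcases hx with rfl|rfl|rfl|rfl <;> assumption

lemma quad_noline {S : Set V} (hS : IsQuad S) :
    ∀ a ∈ S, ∀ b ∈ S, ∀ c ∈ S, a ≠ b → a ≠ c → b ≠ c → a + b + c ≠ 0 := by
  intro a ha b hb c hc hab hac hbc h0
  refine hS.2 {a,b,c} ⟨a,b,c, quad_nonzero hS a ha, quad_nonzero hS b hb,
    quad_nonzero hS c hc, hab, hac, hbc, h0, rfl⟩ ?_
  intro x hx
  simp only [Set.mem_insert_iff, Set.mem_singleton_iff] at hx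
  rcases hx with rfl|rfl|rfl <;> assumption

lemma quad_rep {S : Set V} (hS : IsQuad S) {P : V} (hP : P ∈ S) :
    ∃ A B C, S = {P, A, B, C} ∧ P ≠ A ∧ P ≠ B ∧ P ≠ C ∧ A ≠ B ∧ A ≠ C ∧ B ≠ C := by
  obtain ⟨⟨p,q,r,t,hp,hq,hr,ht,hpq,hpr,hpt,hqr,hqt,hrt,rfl⟩, -⟩ := hS
  simp only [Set.mem_insert_iff, Set.mem_singleton_iff] at hP
  rcases hP with rfl|rfl|rfl|rfl
  · exact ⟨q,r,t, rfl, hpq,hpr,hpt,hqr,hqt,hrt⟩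
  · exact ⟨p,r,t, by ext x; simp; tauto, hpq.symm,hqr,hqt,hpr,hpt,hrt⟩
  · exact ⟨p,q,t, by ext x; simp; tauto, hpr.symm,hqr.symm,hrt,hpq,hpt,hqt⟩
  · exact ⟨p,q,r, by ext x; simp; tauto, hpt.symm,hqt.symm,hrt.symm,hpq,hpr,hqr⟩

lemma quad_rep2 {S : Set V} (hS : IsQuad S) {P X : V} (hP : P ∈ S) (hX : X ∈ S)
    (hPX : P ≠ X) :
    ∃ A B, S = {P, X, A, B} ∧ P ≠ A ∧ P ≠ B ∧ X ≠ A ∧ X ≠ B ∧ A ≠ B := by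
  obtain ⟨A,B,C,hSeq,hPA,hPB,hPC,hAB,hAC,hBC⟩ := quad_rep hS hP
  have hX' : X = A ∨ X = B ∨ X = C := by
    rw [hSeq] at hX
    simp only [Set.mem_insert_iff, Set.mem_singleton_iff] at hX
    rcases hX with rfl|h
    · exact absurd rfl hPX
    · exact h
  rcases hX' with rfl|rfl|rfl
  · exact ⟨B,C, hSeq, hPB,hPC,hAB,hAC,hBC⟩
  · exact ⟨A,C, by rw [hSeq]; ext x; simp; tauto, hPA,hPC,hAB.symm,hBC,hAC⟩
  · exact ⟨A,B, by rw [hSeq]; ext x; simp; tauto, hPA,hPB,hAC.symm,hBC.symm,hAB⟩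

lemma quad_rep3 {S : Set V} (hS : IsQuad S) {P X Z : V} (hP : P ∈ S) (hX : X ∈ S)
    (hZ : Z ∈ S) (hPX : P ≠ X) (hPZ : P ≠ Z) (hXZ : X ≠ Z) :
    ∃ U, S = {P, X, Z, U} ∧ P ≠ U ∧ X ≠ U ∧ Z ≠ U := by
  obtain ⟨A,B,hSeq,hPA,hPB,hXA,hXB,hAB⟩ := quad_rep2 hS hP hX hPX
  have hZ' : Z = A ∨ Z = B := by
    rw [hSeq] at hZ
    simp only [Set.mem_insert_iff, Set.mem_singleton_iff] at hZ
    rcases hZ with rfl|rfl|h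
    · exact absurd rfl hPZ
    · exact absurd rfl hXZ
    · exact h
  rcases hZ' with rfl|rfl
  · exact ⟨B, hSeq, hPB, hXB, hAB⟩
  · exact ⟨A, by rw [hSeq]; ext x; simp; tauto, hPA, hXA, hAB.symm⟩

lemma mem_of_rep4 {S : Set V} {a b c d : V} (h : S = {a,b,c,d}) :
    a ∈ S ∧ b ∈ S ∧ c ∈ S ∧ d ∈ S := by
  rw [h]; refine ⟨by simp, by simp, by simp, by simp⟩
lemma eps_pm {ε : V → V → ℤ} (hε : IsMulFactor ε) {P Q : V} (hP : P ≠ 0) (hQ : Q ≠ 0)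
    (hPQ : P ≠ Q) : ε P Q = 1 ∨ ε P Q = -1 := (hε.1 P Q hP hQ hPQ).1

lemma eps_anti {ε : V → V → ℤ} (hε : IsMulFactor ε) {P Q : V} (hP : P ≠ 0) (hQ : Q ≠ 0)
    (hPQ : P ≠ Q) : ε Q P = -ε P Q := (hε.1 P Q hP hQ hPQ).2

lemma eps_flip {ε : V → V → ℤ} (hε : IsMulFactor ε) (hc : CompCond ε) {P Q : V}
    (hP : P ≠ 0) (hQ : Q ≠ 0) (hPQ : P ≠ Q) : ε P (P + Q) = -ε P Q := by
  have hR0 : P + Q ≠ 0 := fun h => hPQ ((addV_eq_zero P Q).mp h)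
  have hRP : P + Q ≠ P := fun h => hQ ((addV_right_eq P Q).mp h)
  have hRQ : P + Q ≠ Q := fun h => hP ((addV_left_eq P Q).mp h)
  have hsum : Q + P + (P + Q) = 0 := by rw [add_comm Q P]; exact vadd (P + Q)
  have h1 := hc.1 Q P (P + Q) hQ hP hR0 (Ne.symm hPQ) (Ne.symm hRQ) (Ne.symm hRP) hsum
  rw [eps_anti hε hP hQ hPQ] at h1
  exact sign_neg_mul (eps_pm hε hP hQ hPQ) (eps_pm hε hP hR0 (Ne.symm hRP)) h1

lemma dist_const {ε : V → V → ℤ} (hε : IsMulFactor ε) (hc : CompCond ε) {S : Set V}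
    {P : V} (hS : IsQuad S) (hd : IsDistPt ε S P) :
    ∀ x ∈ S, x ≠ P → ∀ y ∈ S, y ≠ P → ε P x = ε P y := by
  obtain ⟨hPS, -, a, b, c, hT, hab, hac, hbc, he1, he2⟩ := hd
  have hma : a ∈ S ∧ a ≠ P := by
    have : a ∈ S \ {P} := by rw [hT]; exact Set.mem_insert _ _
    exact ⟨this.1, by simpa using this.2⟩
  have hmb : b ∈ S ∧ b ≠ P := by
    have : b ∈ S \ {P} := by rw [hT]; simp
    exact ⟨this.1, by simpa using this.2⟩
  have hmc : c ∈ S ∧ c ≠ P := by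
    have : c ∈ S \ {P} := by rw [hT]; simp
    exact ⟨this.1, by simpa using this.2⟩
  have hP0 : P ≠ 0 := quad_nonzero hS P hPS
  have ha0 : a ≠ 0 := quad_nonzero hS a hma.1
  have hb0 : b ≠ 0 := quad_nonzero hS b hmb.1
  have hc0 : c ≠ 0 := quad_nonzero hS c hmc.1
  have hSrep : S = {P, a, b, c} := by
    have h1 : insert P (S \ {P}) = S := by
      rw [Set.insert_diff_singleton, Set.insert_eq_self.mpr hPS]
    rw [← h1, hT]
  have hq1 : IsQuad ({P,a,b,c} : Set V) := hSrep ▸ hS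
  have hq2 : IsQuad ({P,a,c,b} : Set V) := by
    have : ({P,a,c,b} : Set V) = {P,a,b,c} := by ext x; simp; tauto
    rw [this]; exact hq1
  have key1 := hc.2 P a b c hP0 ha0 hb0 hc0 (Ne.symm hma.2) (Ne.symm hmb.2)
    (Ne.symm hmc.2) hab hac hbc hq1
  have key2 := hc.2 P a c b hP0 ha0 hc0 hb0 (Ne.symm hma.2) (Ne.symm hmc.2)
    (Ne.symm hmb.2) hac hab (fun h => hbc h.symm) hq2
  rw [eps_anti hε hP0 hc0 (Ne.symm hmc.2), he1] at key1
  have hPac : ε P a = ε P c := sign4_s5 (eps_pm hε hP0 ha0 (Ne.symm hma.2))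
    (eps_pm hε hb0 hc0 hbc) (eps_pm hε hP0 hc0 (Ne.symm hmc.2)) key1
  rw [eps_anti hε hc0 ha0 (fun h => hac h.symm),
    eps_anti hε hb0 hc0 hbc, eps_anti hε hP0 hb0 (Ne.symm hmb.2), ← he2] at key2
  have hPab : ε P a = ε P b := sign4' (eps_pm hε hP0 ha0 (Ne.symm hma.2))
    (eps_pm hε hb0 hc0 hbc) (eps_pm hε hP0 hb0 (Ne.symm hmb.2)) key2
  have hall : ∀ z, z ∈ S → z ≠ P → ε P z = ε P a := by
    intro z hz hzP
    have : z ∈ S \ {P} := ⟨hz, by simpa using hzP⟩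
    rw [hT] at this
    simp only [Set.mem_insert_iff, Set.mem_singleton_iff] at this
    rcases this with rfl|rfl|rfl
    · rfl
    · exact hPab.symm
    · exact hPac.symm
  intro x hx hxP y hy hyP
  rw [hall x hx hxP, hall y hy hyP]
lemma inter_pair {S₁ S₂ : Set V} (hS₁ : IsQuad S₁) (hS₂ : IsQuad S₂) (hne : S₁ ≠ S₂) :
    ∃ X Y : V, X ≠ Y ∧ S₁ ∩ S₂ = {X, Y} := by
  have hcom : ∃ z, z ∈ S₁ ∧ z ∈ S₂ := by
    by_contra hno
    push_neg at hno
    obtain ⟨⟨p,q,r,t,hp,hq,hr,ht,hpq,hpr,hpt,hqr,hqt,hrt,hSeq1⟩, -⟩ := hS₁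
    obtain ⟨⟨p',q',r',t',hp',hq',hr',ht',hpq',hpr',hpt',hqr',hqt',hrt',hSeq2⟩, -⟩ := hS₂
    obtain ⟨mp, mq, mr, mt⟩ := mem_of_rep4 hSeq1
    obtain ⟨mp', mq', mr', mt'⟩ := mem_of_rep4 hSeq2
    have cross : ∀ u, u ∈ S₁ → ∀ v, v ∈ S₂ → u ≠ v := fun u hu v hv he => hno u hu (he ▸ hv)
    apply nine_distinct 0 p q r t p' q' r' t' <;>
      first | assumption | (symm; assumption) | (exact cross _ ‹_› _ ‹_›)
  obtain ⟨X, hX1, hX2⟩ := hcom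
  by_cases hsec : ∃ z, z ∈ S₁ ∧ z ∈ S₂ ∧ z ≠ X
  · obtain ⟨Z, hZ1, hZ2, hZX⟩ := hsec
    refine ⟨X, Z, Ne.symm hZX, ?_⟩
    apply Set.eq_of_subset_of_subset
    · intro w hw
      by_contra hwXZ
      simp only [Set.mem_insert_iff, Set.mem_singleton_iff] at hwXZ
      push_neg at hwXZ
      obtain ⟨hwX, hwZ⟩ := hwXZ
      obtain ⟨U, hSeqU, hXU, hZU, hwU⟩ :=
        quad_rep3 hS₁ hX1 hZ1 hw.1 (Ne.symm hZX) (Ne.symm hwX) (Ne.symm hwZ)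
      obtain ⟨U', hSeqU', hXU', hZU', hwU'⟩ :=
        quad_rep3 hS₂ hX2 hZ2 hw.2 (Ne.symm hZX) (Ne.symm hwX) (Ne.symm hwZ)
      obtain ⟨mX, mZ, mw, mU⟩ := mem_of_rep4 hSeqU
      obtain ⟨mX', mZ', mw', mU'⟩ := mem_of_rep4 hSeqU'
      have h0X : X ≠ 0 := quad_nonzero hS₁ X mX
      have h0Z : Z ≠ 0 := quad_nonzero hS₁ Z mZ
      have h0w : w ≠ 0 := quad_nonzero hS₁ w mw
      have h0U : U ≠ 0 := quad_nonzero hS₁ U mU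
      have h0U' : U' ≠ 0 := quad_nonzero hS₂ U' mU'
      have hsum1 : X + Z + w + U = 0 :=
        quad_sum X Z w U (Ne.symm hZX) (Ne.symm hwX) hXU (Ne.symm hwZ) hZU hwU
          h0X h0Z h0w h0U
          (quad_noline hS₁ X mX Z mZ w mw (Ne.symm hZX) (Ne.symm hwX) (Ne.symm hwZ))
          (quad_noline hS₁ X mX Z mZ U mU (Ne.symm hZX) hXU hZU)
          (quad_noline hS₁ X mX w mw U mU (Ne.symm hwX) hXU hwU)
          (quad_noline hS₁ Z mZ w mw U mU (Ne.symm hwZ) hZU hwU)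
      have hsum2 : X + Z + w + U' = 0 :=
        quad_sum X Z w U' (Ne.symm hZX) (Ne.symm hwX) hXU' (Ne.symm hwZ) hZU' hwU'
          h0X h0Z h0w h0U'
          (quad_noline hS₂ X mX' Z mZ' w mw' (Ne.symm hZX) (Ne.symm hwX) (Ne.symm hwZ))
          (quad_noline hS₂ X mX' Z mZ' U' mU' (Ne.symm hZX) hXU' hZU')
          (quad_noline hS₂ X mX' w mw' U' mU' (Ne.symm hwX) hXU' hwU')
          (quad_noline hS₂ Z mZ' w mw' U' mU' (Ne.symm hwZ) hZU' hwU')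
      have hU1 : X + Z + w = U := (addV_eq_zero (X + Z + w) U).mp hsum1
      have hU2 : X + Z + w = U' := (addV_eq_zero (X + Z + w) U').mp hsum2
      exact hne (by rw [hSeqU, hSeqU', ← hU1, ← hU2])
    · intro w hw
      simp only [Set.mem_insert_iff, Set.mem_singleton_iff] at hw
      rcases hw with rfl|rfl
      · exact ⟨hX1, hX2⟩
      · exact ⟨hZ1, hZ2⟩
  · exfalso
    push_neg at hsec
    obtain ⟨a,b,c,hSeq1,hXa,hXb,hXc,hab,hac,hbc⟩ := quad_rep hS₁ hX1
    obtain ⟨x,y,z,hSeq2,hXx,hXy,hXz,hxy,hxz,hyz⟩ := quad_rep hS₂ hX2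
    obtain ⟨mX, ma, mb, mc⟩ := mem_of_rep4 hSeq1
    obtain ⟨mX', mx, my, mz⟩ := mem_of_rep4 hSeq2
    have hX0 : X ≠ 0 := quad_nonzero hS₁ X mX
    have ha0 : a ≠ 0 := quad_nonzero hS₁ a ma
    have hb0 : b ≠ 0 := quad_nonzero hS₁ b mb
    have hc0 : c ≠ 0 := quad_nonzero hS₁ c mc
    have hx0 : x ≠ 0 := quad_nonzero hS₂ x mx
    have hy0 : y ≠ 0 := quad_nonzero hS₂ y my
    have hz0 : z ≠ 0 := quad_nonzero hS₂ z mz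
    have hax : a ≠ x := fun h => hXa (hsec a ma (h ▸ mx)).symm
    have hay : a ≠ y := fun h => hXa (hsec a ma (h ▸ my)).symm
    have haz : a ≠ z := fun h => hXa (hsec a ma (h ▸ mz)).symm
    have hbx : b ≠ x := fun h => hXb (hsec b mb (h ▸ mx)).symm
    have hby : b ≠ y := fun h => hXb (hsec b mb (h ▸ my)).symm
    have hbz : b ≠ z := fun h => hXb (hsec b mb (h ▸ mz)).symm
    have hcx : c ≠ x := fun h => hXc (hsec c mc (h ▸ mx)).symm
    have hcy : c ≠ y := fun h => hXc (hsec c mc (h ▸ my)).symm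
    have hcz : c ≠ z := fun h => hXc (hsec c mc (h ▸ mz)).symm
    have himg : ∀ u, u ∈ S₁ → u ≠ X → u ≠ 0 →
        (X + u ≠ 0) → (X + u ≠ X) → (X + u ≠ a) → (X + u ≠ b) → (X + u ≠ c) →
        X + u = x ∨ X + u = y ∨ X + u = z := by
      intro u _ _ _ h1 h2 h3 h4 h5
      by_contra hn
      push_neg at hn
      obtain ⟨hn1, hn2, hn3⟩ := hn
      apply nine_distinct 0 X a b c x y z (X + u) <;>
        first | assumption | (symm; assumption)
    have hXaa : X + a ≠ a := fun h => hX0 ((addV_left_eq X a).mp h)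
    have hXbb : X + b ≠ b := fun h => hX0 ((addV_left_eq X b).mp h)
    have hXcc : X + c ≠ c := fun h => hX0 ((addV_left_eq X c).mp h)
    have hma : X + a = x ∨ X + a = y ∨ X + a = z :=
      himg a ma (Ne.symm hXa) ha0
        (fun h => hXa ((addV_eq_zero X a).mp h))
        (fun h => ha0 ((addV_right_eq X a).mp h))
        hXaa
        (add_ne3 (quad_noline hS₁ X mX a ma b mb hXa hXb hab))
        (add_ne3 (quad_noline hS₁ X mX a ma c mc hXa hXc hac))
    have hmb : X + b = x ∨ X + b = y ∨ X + b = z :=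
      himg b mb (Ne.symm hXb) hb0
        (fun h => hXb ((addV_eq_zero X b).mp h))
        (fun h => hb0 ((addV_right_eq X b).mp h))
        (add_ne3 (quad_noline hS₁ X mX b mb a ma hXb hXa (Ne.symm hab)))
        hXbb
        (add_ne3 (quad_noline hS₁ X mX b mb c mc hXb hXc hbc))
    have hmc : X + c = x ∨ X + c = y ∨ X + c = z :=
      himg c mc (Ne.symm hXc) hc0
        (fun h => hXc ((addV_eq_zero X c).mp h))
        (fun h => hc0 ((addV_right_eq X c).mp h))
        (add_ne3 (quad_noline hS₁ X mX c mc a ma hXc hXa (Ne.symm hac)))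
        (add_ne3 (quad_noline hS₁ X mX c mc b mb hXc hXb (Ne.symm hbc)))
        hXcc
    have hab' : X + a ≠ X + b := fun h => hab (add_left_cancel h)
    have hac' : X + a ≠ X + c := fun h => hac (add_left_cancel h)
    have hbc' : X + b ≠ X + c := fun h => hbc (add_left_cancel h)
    have hperm : (X+a)+(X+b)+(X+c) = x + y + z :=
      sum3_perm _ _ _ _ _ _ hab' hac' hbc' hma hmb hmc
    have hsum1 : X + a + b + c = 0 :=
      quad_sum X a b c hXa hXb hXc hab hac hbc hX0 ha0 hb0 hc0
        (quad_noline hS₁ X mX a ma b mb hXa hXb hab)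
        (quad_noline hS₁ X mX a ma c mc hXa hXc hac)
        (quad_noline hS₁ X mX b mb c mc hXb hXc hbc)
        (quad_noline hS₁ a ma b mb c mc hab hac hbc)
    have hsum2 : X + x + y + z = 0 :=
      quad_sum X x y z hXx hXy hXz hxy hxz hyz hX0 hx0 hy0 hz0
        (quad_noline hS₂ X mX' x mx y my hXx hXy hxy)
        (quad_noline hS₂ X mX' x mx z mz hXx hXz hxz)
        (quad_noline hS₂ X mX' y my z mz hXy hXz hyz)
        (quad_noline hS₂ x mx y my z mz hxy hxz hyz)
    have habc : a + b + c = X := by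
      have h' : X + (a + b + c) = 0 := by rw [← add_assoc, ← add_assoc]; exact hsum1
      exact ((addV_eq_zero X (a+b+c)).mp h').symm
    have hxyz : x + y + z = X := by
      have h' : X + (x + y + z) = 0 := by rw [← add_assoc, ← add_assoc]; exact hsum2
      exact ((addV_eq_zero X (x+y+z)).mp h').symm
    have hlhs : (X+a)+(X+b)+(X+c) = 0 := by
      have e1 : (X+a)+(X+b) = a + b := by rw [add_add_add_comm, vadd, zero_add]
      have e2 : (a+b)+(X+c) = X + (a+b+c) := by
        rw [add_comm (a+b) (X+c), add_assoc, add_comm c (a+b)]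
      rw [e1, e2, habc]
      exact vadd X
    rw [hperm, hxyz] at hlhs
    exact hX0 hlhs
lemma dist_inj {ε : V → V → ℤ} (hε : IsMulFactor ε) (hc : CompCond ε) {S₁ S₂ : Set V}
    {P : V} (hS₁ : IsQuad S₁) (hS₂ : IsQuad S₂) (hd₁ : IsDistPt ε S₁ P)
    (hd₂ : IsDistPt ε S₂ P) : S₁ = S₂ := by
  by_contra hne
  obtain ⟨X, Y, hXY, hI⟩ := inter_pair hS₁ hS₂ hne
  have hPI : P = X ∨ P = Y := by
    have : P ∈ S₁ ∩ S₂ := ⟨hd₁.1, hd₂.1⟩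
    rw [hI] at this; simpa using this
  obtain ⟨W, hWP, hIPW⟩ : ∃ W, W ≠ P ∧ S₁ ∩ S₂ = {P, W} := by
    rcases hPI with rfl|rfl
    · exact ⟨Y, Ne.symm hXY, hI⟩
    · exact ⟨X, hXY, by rw [hI]; exact Set.pair_comm X P⟩
  have hWmem : W ∈ S₁ ∩ S₂ := by rw [hIPW]; simp
  obtain ⟨a, b, hSeq1, hPa, hPb, hWa, hWb, hab⟩ := quad_rep2 hS₁ hd₁.1 hWmem.1 (Ne.symm hWP)
  obtain ⟨c, d, hSeq2, hPc, hPd, hWc, hWd, hcd⟩ := quad_rep2 hS₂ hd₂.1 hWmem.2 (Ne.symm hWP)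
  obtain ⟨mP, mW, ma, mb⟩ := mem_of_rep4 hSeq1
  obtain ⟨mP', mW', mc, md⟩ := mem_of_rep4 hSeq2
  have hP0 : P ≠ 0 := quad_nonzero hS₁ P mP
  have hW0 : W ≠ 0 := quad_nonzero hS₁ W mW
  have ha0 : a ≠ 0 := quad_nonzero hS₁ a ma
  have hb0 : b ≠ 0 := quad_nonzero hS₁ b mb
  have hc0 : c ≠ 0 := quad_nonzero hS₂ c mc
  have hd0 : d ≠ 0 := quad_nonzero hS₂ d md
  have hanotin : a ∉ S₂ := by
    intro h
    have : a ∈ S₁ ∩ S₂ := ⟨ma, h⟩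
    rw [hIPW] at this
    simp only [Set.mem_insert_iff, Set.mem_singleton_iff] at this
    rcases this with rfl|rfl
    · exact hPa rfl
    · exact hWa rfl
  have hbnotin : b ∉ S₂ := by
    intro h
    have : b ∈ S₁ ∩ S₂ := ⟨mb, h⟩
    rw [hIPW] at this
    simp only [Set.mem_insert_iff, Set.mem_singleton_iff] at this
    rcases this with rfl|rfl
    · exact hPb rfl
    · exact hWb rfl
  have hac : a ≠ c := fun h => hanotin (h ▸ mc)
  have had : a ≠ d := fun h => hanotin (h ▸ md)
  have hbc : b ≠ c := fun h => hbnotin (h ▸ mc)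
  have hbd : b ≠ d := fun h => hbnotin (h ▸ md)
  have const1 := dist_const hε hc hS₁ hd₁
  have const2 := dist_const hε hc hS₂ hd₂
  have eWa : ε P a = ε P W := const1 a ma (Ne.symm hPa) W mW hWP
  have eWb : ε P b = ε P W := const1 b mb (Ne.symm hPb) W mW hWP
  have eWc : ε P c = ε P W := const2 c mc (Ne.symm hPc) W mW' hWP
  have eWd : ε P d = ε P W := const2 d md (Ne.symm hPd) W mW' hWP
  have hpmW : ε P W = 1 ∨ ε P W = -1 := eps_pm hε hP0 hW0 (Ne.symm hWP)
  have contra : ∀ u w : V, u ≠ 0 → P ≠ u → ε P u = ε P W → ε P w = ε P W →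
      P + u = w → False := by
    intro u w hu0 hPu hεu hεw heq
    have hf : ε P w = -ε P u := heq ▸ eps_flip hε hc hP0 hu0 hPu
    rw [hεw, hεu] at hf
    exact sign_ne hpmW hf
  by_cases h1 : P + a = c
  · exact contra a c ha0 hPa eWa eWc h1
  by_cases h2 : P + a = d
  · exact contra a d ha0 hPa eWa eWd h2
  by_cases h3 : P + b = c
  · exact contra b c hb0 hPb eWb eWc h3
  by_cases h4 : P + b = d
  · exact contra b d hb0 hPb eWb eWd h4
  have hPa0 : P + a ≠ 0 := fun h => hPa ((addV_eq_zero P a).mp h)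
  have hPaP : P + a ≠ P := fun h => ha0 ((addV_right_eq P a).mp h)
  have hPaa : P + a ≠ a := fun h => hP0 ((addV_left_eq P a).mp h)
  have hPaW : P + a ≠ W :=
    add_ne3 (quad_noline hS₁ P mP a ma W mW hPa (Ne.symm hWP) (Ne.symm hWa))
  have hPab : P + a ≠ b := add_ne3 (quad_noline hS₁ P mP a ma b mb hPa hPb hab)
  have hPb0 : P + b ≠ 0 := fun h => hPb ((addV_eq_zero P b).mp h)
  have hPbP : P + b ≠ P := fun h => hb0 ((addV_right_eq P b).mp h)
  have hPbb : P + b ≠ b := fun h => hP0 ((addV_left_eq P b).mp h)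
  have hPbW : P + b ≠ W :=
    add_ne3 (quad_noline hS₁ P mP b mb W mW hPb (Ne.symm hWP) (Ne.symm hWb))
  have hPba : P + b ≠ a :=
    add_ne3 (quad_noline hS₁ P mP b mb a ma hPb hPa (Ne.symm hab))
  have hPaPb : P + a ≠ P + b := fun h => hab (add_left_cancel h)
  apply nine_distinct 0 P W a b c d (P + a) (P + b) <;>
    first | assumption | (symm; assumption)
/-- for distinct quadrilaterals with oriented triangles `T₁ = S₁ \ {P₁}`,
`T₂ = S₂ \ {P₂}`: these triangles meet in exactly one point iff `S₁ ∩ S₂` contains exactly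
one of the distinguished points `P₁`, `P₂`. -/
theorem stmt_5 (ε : V → V → ℤ) (hε : IsMulFactor ε) (hc : CompCond ε)
    (S₁ S₂ : Set V) (hS₁ : IsQuad S₁) (hS₂ : IsQuad S₂) (hne : S₁ ≠ S₂)
    (P₁ P₂ : V) (h₁ : IsDistPt ε S₁ P₁) (h₂ : IsDistPt ε S₂ P₂) :
    (∃ X : V, (S₁ \ {P₁}) ∩ (S₂ \ {P₂}) = {X}) ↔
      ((P₁ ∈ S₁ ∩ S₂ ∧ P₂ ∉ S₁ ∩ S₂) ∨ (P₁ ∉ S₁ ∩ S₂ ∧ P₂ ∈ S₁ ∩ S₂)) := by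
  obtain ⟨X, Y, hXY, hI⟩ := inter_pair hS₁ hS₂ hne
  have hIz : ∀ z : V, (z ∈ S₁ ∧ z ∈ S₂) ↔ (z = X ∨ z = Y) := by
    intro z
    rw [← Set.mem_inter_iff, hI]
    simp
  have hXI : X ∈ S₁ ∧ X ∈ S₂ := (hIz X).mpr (Or.inl rfl)
  have hYI : Y ∈ S₁ ∧ Y ∈ S₂ := (hIz Y).mpr (Or.inr rfl)
  have hTT : ∀ z : V, z ∈ (S₁ \ {P₁}) ∩ (S₂ \ {P₂}) ↔
      ((z = X ∨ z = Y) ∧ z ≠ P₁ ∧ z ≠ P₂) := by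
    intro z
    simp only [Set.mem_inter_iff, Set.mem_diff, Set.mem_singleton_iff]
    have := hIz z
    tauto
  by_cases hP1 : P₁ ∈ S₂ <;> by_cases hP2 : P₂ ∈ S₁
  · -- both distinguished points in the intersection
    have hP1I : P₁ = X ∨ P₁ = Y := (hIz P₁).mp ⟨h₁.1, hP1⟩
    have hP2I : P₂ = X ∨ P₂ = Y := (hIz P₂).mp ⟨hP2, h₂.1⟩
    have hPP : P₁ ≠ P₂ := by
      rintro rfl
      exact hne (dist_inj hε hc hS₁ hS₂ h₁ h₂)
    apply iff_of_false
    · rintro ⟨W, hW⟩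
      have hWmem : W ∈ (S₁ \ {P₁}) ∩ (S₂ \ {P₂}) := by rw [hW]; rfl
      obtain ⟨hor, hne1, hne2⟩ := (hTT W).mp hWmem
      rcases hP1I with rfl|rfl <;> rcases hP2I with rfl|rfl <;>
        first | exact hPP rfl | tauto
    · rintro (⟨-, h⟩ | ⟨h, -⟩)
      · exact h ⟨hP2, h₂.1⟩
      · exact h ⟨h₁.1, hP1⟩
  · -- P₁ in the intersection, P₂ not
    have hP1I : P₁ = X ∨ P₁ = Y := (hIz P₁).mp ⟨h₁.1, hP1⟩
    obtain ⟨W, hWP, hWI⟩ : ∃ W, W ≠ P₁ ∧ (W = X ∨ W = Y) := by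
      rcases hP1I with h|h
      · exact ⟨Y, fun hYP => hXY ((hYP.trans h).symm), Or.inr rfl⟩
      · exact ⟨X, fun hXP => hXY (hXP.trans h), Or.inl rfl⟩
    have hWmem : W ∈ S₁ ∧ W ∈ S₂ := (hIz W).mpr hWI
    have hWP2 : W ≠ P₂ := fun h => hP2 (h ▸ hWmem.1)
    apply iff_of_true
    · refine ⟨W, Set.eq_singleton_iff_unique_mem.mpr ⟨(hTT W).mpr ⟨hWI, hWP, hWP2⟩, ?_⟩⟩
      intro z hz
      obtain ⟨hor, hz1, hz2⟩ := (hTT z).mp hz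
      rcases hP1I with hP|hP <;> rcases hWI with hW|hW <;> rcases hor with rfl|rfl <;>
        first
          | exact absurd (hW.trans hP.symm) hWP
          | exact absurd hP.symm hz1
          | exact hW.symm
    · exact Or.inl ⟨⟨h₁.1, hP1⟩, fun hmem => hP2 hmem.1⟩
  · -- P₂ in the intersection, P₁ not
    have hP2I : P₂ = X ∨ P₂ = Y := (hIz P₂).mp ⟨hP2, h₂.1⟩
    obtain ⟨W, hWP, hWI⟩ : ∃ W, W ≠ P₂ ∧ (W = X ∨ W = Y) := by
      rcases hP2I with h|h
      · exact ⟨Y, fun hYP => hXY ((hYP.trans h).symm), Or.inr rfl⟩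
      · exact ⟨X, fun hXP => hXY (hXP.trans h), Or.inl rfl⟩
    have hWmem : W ∈ S₁ ∧ W ∈ S₂ := (hIz W).mpr hWI
    have hWP1 : W ≠ P₁ := fun h => hP1 (h ▸ hWmem.2)
    apply iff_of_true
    · refine ⟨W, Set.eq_singleton_iff_unique_mem.mpr ⟨(hTT W).mpr ⟨hWI, hWP1, hWP⟩, ?_⟩⟩
      intro z hz
      obtain ⟨hor, hz1, hz2⟩ := (hTT z).mp hz
      rcases hP2I with hP|hP <;> rcases hWI with hW|hW <;> rcases hor with rfl|rfl <;>
        first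
          | exact absurd (hW.trans hP.symm) hWP
          | exact absurd hP.symm hz2
          | exact hW.symm
    · exact Or.inr ⟨fun hmem => hP1 hmem.2, ⟨hP2, h₂.1⟩⟩
  · -- neither distinguished point in the intersection
    have hXP1 : X ≠ P₁ := fun h => hP1 (h ▸ hXI.2)
    have hXP2 : X ≠ P₂ := fun h => hP2 (h ▸ hXI.1)
    have hYP1 : Y ≠ P₁ := fun h => hP1 (h ▸ hYI.2)
    have hYP2 : Y ≠ P₂ := fun h => hP2 (h ▸ hYI.1)
    apply iff_of_false
    · rintro ⟨W, hW⟩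
      have hXm : X ∈ (S₁ \ {P₁}) ∩ (S₂ \ {P₂}) := (hTT X).mpr ⟨Or.inl rfl, hXP1, hXP2⟩
      have hYm : Y ∈ (S₁ \ {P₁}) ∩ (S₂ \ {P₂}) := (hTT Y).mpr ⟨Or.inr rfl, hYP1, hYP2⟩
      rw [hW] at hXm hYm
      exact hXY (hXm.trans hYm.symm)
    · rintro (⟨h, -⟩ | ⟨-, h⟩)
      · exact hP1 h.2
      · exact hP2 h.1
end
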